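/- arXiv:2106.01261 — 10 statements merged into one kernel-verified Lean document; each statement's English description precedes it below -/
import Mathlib

section
/- Let n be a positive integer divisible by 4, write n = 4dg. Then the set of positive multiples kd of d with 0 ≤ kd < n and k odd equals the disjoint union over odd divisors h of g of the sets G_n(hd) = {m : 1 ≤ m ≤ n-1, gcd(m,n) = hd}. -/
open Finset

/-- `G_n(d) = {k : 1 ≤ k ≤ n-1, gcd(k,n) = d}` -/
def Gset (n d : ℕ) : Finset ℕ := (Finset.range n).filter (fun k => 1 ≤ k ∧ Nat.gcd k n = d)

/-- `M_n^r(d) = {dk : 0 ≤ dk < n, k ≡ r (mod 4)}` -/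
def Mset (n d r : ℕ) : Finset ℕ := (Finset.range n).filter (fun m => d ∣ m ∧ (m / d) % 4 = r)

/-- Odd divisors of `g`. -/
def Dodd (g : ℕ) : Finset ℕ := g.divisors.filter (fun h => h % 2 = 1)

lemma gcd_key (d g k : ℕ) (hk : k % 2 = 1) :
    Nat.gcd (d * k) (4 * d * g) = Nat.gcd k g * d := by
  have h2 : Nat.Coprime 2 k := (Nat.coprime_two_left).2 (Nat.odd_iff.2 hk)
  have h4 : Nat.Coprime 4 k := by
    have := Nat.Coprime.pow_left 2 h2
    simpa [show (2:ℕ)^2 = 4 by norm_num] using this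
  calc Nat.gcd (d * k) (4 * d * g) = Nat.gcd (d * k) (d * (4 * g)) := by ring_nf
    _ = d * Nat.gcd k (4 * g) := Nat.gcd_mul_left d k (4 * g)
    _ = d * Nat.gcd k g := by rw [Nat.Coprime.gcd_mul_left_cancel_right g h4]
    _ = Nat.gcd k g * d := mul_comm _ _

theorem stmt0 (n d g : ℕ) (hd : 0 < d) (hg : 0 < g) (hn : n = 4 * d * g) :
    Mset n d 1 ∪ Mset n d 3 = (Dodd g).biUnion (fun h => Gset n (h * d)) ∧
    ∀ h₁ ∈ Dodd g, ∀ h₂ ∈ Dodd g, h₁ ≠ h₂ →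
      Disjoint (Gset n (h₁ * d)) (Gset n (h₂ * d)) := by
  constructor
  · ext m
    simp only [Mset, Gset, Dodd, mem_union, mem_filter, mem_range, mem_biUnion,
      Nat.mem_divisors]
    constructor
    · rintro (⟨hm, ⟨k, rfl⟩, hmod⟩ | ⟨hm, ⟨k, rfl⟩, hmod⟩) <;>
      · rw [Nat.mul_div_cancel_left _ hd] at hmod
        have hk2 : k % 2 = 1 := by omega
        have hkpos : 0 < k := by omega
        have hgcd := gcd_key d g k hk2
        have hodd : Nat.gcd k g % 2 = 1 := by
          rcases Nat.even_or_odd (Nat.gcd k g) with he | ho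
          · exfalso
            have h2k : 2 ∣ k := dvd_trans he.two_dvd (Nat.gcd_dvd_left k g)
            omega
          · exact Nat.odd_iff.1 ho
        exact ⟨Nat.gcd k g, ⟨⟨Nat.gcd_dvd_right k g, hg.ne'⟩, hodd⟩, hm,
          Nat.one_le_iff_ne_zero.2 (by positivity), by rw [hn]; exact hgcd⟩
    · rintro ⟨h, ⟨⟨hdvd, _⟩, hodd⟩, hm, hm1, hgcd⟩
      have hdm : d ∣ m := dvd_trans ⟨h, mul_comm h d⟩ (hgcd ▸ Nat.gcd_dvd_left m n)
      obtain ⟨k, rfl⟩ := hdm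
      have hk2 : k % 2 = 1 := by
        by_contra hk
        have h2k : 2 ∣ k := by omega
        have h2n : 2 ∣ n := ⟨2 * d * g, by rw [hn]; ring⟩
        have : 2 ∣ h * d := hgcd ▸ Nat.dvd_gcd (Dvd.dvd.mul_left h2k d) h2n
        have hdd : 2 ∣ h ∨ 2 ∣ d := (Nat.prime_two.dvd_mul).1 this
        rcases hdd with h2h | h2d
        · omega
        · -- 2 ∣ d, but also gcd (d*k) n = h*d and k even: show contradiction via k odd needed
          have : Nat.gcd (d * k) n = d * Nat.gcd k (4 * g) := by
            rw [hn, show 4 * d * g = d * (4 * g) by ring, Nat.gcd_mul_left]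
          rw [hgcd] at this
          have hh : h = Nat.gcd k (4 * g) := by
            have := this
            rw [mul_comm h d] at this
            exact Nat.eq_of_mul_eq_mul_left hd this
          have h2g : 2 ∣ Nat.gcd k (4 * g) := Nat.dvd_gcd h2k ⟨2 * g, by ring⟩
          omega
      rw [Nat.mul_div_cancel_left _ hd]
      have h4 : k % 4 = 1 ∨ k % 4 = 3 := by omega
      rcases h4 with h4 | h4
      · exact Or.inl ⟨hm, dvd_mul_right d k, h4⟩
      · exact Or.inr ⟨hm, dvd_mul_right d k, h4⟩
  · intro h₁ hh₁ h₂ hh₂ hne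
    rw [Finset.disjoint_left]
    intro m hm1 hm2
    simp only [Gset, mem_filter] at hm1 hm2
    exact hne (Nat.eq_of_mul_eq_mul_right hd (hm1.2.2 ▸ hm2.2.2))
end

section
/- Let n be a positive integer divisible by 4, write n = 4dg. Then M_n^2(d) = ⋃_{h ∈ D_g} G_n(2hd), where the union is over odd divisors h of g. -/
open Finset

theorem stmt1 (n d g : ℕ) (hd : 0 < d) (hg : 0 < g) (hn : n = 4 * d * g) :
    Mset n d 2 = (Dodd g).biUnion (fun h => Gset n (2 * h * d)) := by
  subst hn
  ext m
  simp only [Mset, Gset, Dodd, mem_filter, mem_range, mem_biUnion, Nat.mem_divisors]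
  constructor
  · rintro ⟨hm, ⟨k, rfl⟩, hmod⟩
    rw [Nat.mul_div_cancel_left k hd] at hmod
    obtain ⟨q, hq⟩ : ∃ q, k = 4 * q + 2 := ⟨k / 4, by omega⟩
    set j := 2 * q + 1 with hj
    have hjodd : ¬ 2 ∣ j := by omega
    have hgcdj : Nat.gcd j (2 * g) = Nat.gcd j g := by
      have h2 : Nat.Coprime 2 j := by
        exact Nat.coprime_two_left.mpr ⟨q, by omega⟩
      exact h2.gcd_mul_left_cancel_right g
    have hodd : Nat.gcd j g % 2 = 1 := by
      rcases Nat.mod_two_eq_zero_or_one (Nat.gcd j g) with h0 | h1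
      · exact absurd ((Nat.dvd_of_mod_eq_zero h0).trans (Nat.gcd_dvd_left j g)) hjodd
      · exact h1
    refine ⟨Nat.gcd j g, ⟨⟨Nat.gcd_dvd_right j g, hg.ne'⟩, hodd⟩, hm, ?_, ?_⟩
    · have : 0 < d * k := Nat.mul_pos hd (by omega)
      omega
    · have e1 : d * k = 2 * d * j := by rw [hq, hj]; ring
      have e2 : 4 * d * g = 2 * d * (2 * g) := by ring
      rw [e1, e2, Nat.gcd_mul_left, hgcdj]
      ring
  · rintro ⟨h, ⟨⟨hdvd, _⟩, hodd⟩, hm, hm1, hgcd⟩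
    have hh : 0 < h := by omega
    have hdvdm : 2 * h * d ∣ m := hgcd ▸ Nat.gcd_dvd_left m (4 * d * g)
    obtain ⟨t, rfl⟩ := hdvdm
    have htodd : t % 2 = 1 := by
      rcases Nat.mod_two_eq_zero_or_one t with h0 | h1
      · exfalso
        obtain ⟨s, rfl⟩ : ∃ s, t = 2 * s := ⟨t / 2, by omega⟩
        have d1 : 4 * h * d ∣ 2 * h * d * (2 * s) := ⟨s, by ring⟩
        have d2 : 4 * h * d ∣ 4 * d * g := by
          obtain ⟨u, rfl⟩ := hdvd
          exact ⟨u, by ring⟩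
        have := Nat.dvd_gcd d1 d2
        rw [hgcd] at this
        have := Nat.le_of_dvd (by positivity) this
        nlinarith
      · exact h1
    refine ⟨hm, ⟨2 * h * t, by ring⟩, ?_⟩
    have e1 : 2 * h * d * t = d * (2 * h * t) := by ring
    rw [e1, Nat.mul_div_cancel_left _ hd]
    have : h * t % 2 = 1 := by
      rw [Nat.mul_mod, hodd, htodd]
    obtain ⟨u, hu⟩ : ∃ u, h * t = 2 * u + 1 := ⟨h * t / 2, by omega⟩
    have : 2 * h * t = 2 * (h * t) := by ring
    omega
end

section
/- Let n ≡ 0 (mod 4), n = 4dg, and let x be a complex number with x^n = 1. Then the sum ∑_{q ∈ M_n^0(d)} x^q is an integer, and likewise ∑_{q ∈ M_n^2(d)} x^q is an integer. -/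
open Finset

lemma Mset_eq_image (n d g r : ℕ) (hd : 0 < d) (hn : n = 4 * d * g) (hr : r < 4) :
    Mset n d r = (Finset.range g).image (fun j => d * (4 * j + r)) := by
  ext m
  simp only [Mset, mem_filter, mem_range, mem_image]
  constructor
  · rintro ⟨hm, ⟨k, rfl⟩, hk⟩
    rw [Nat.mul_div_cancel_left k hd] at hk
    have hk4 : k < 4 * g := by
      by_contra hc
      push_neg at hc
      have : 4 * d * g ≤ d * k := by
        calc 4 * d * g = d * (4 * g) := by ring
        _ ≤ d * k := Nat.mul_le_mul_left d hc
      omega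
    exact ⟨k / 4, by omega, by congr 1; omega⟩
  · rintro ⟨j, hj, rfl⟩
    refine ⟨?_, ⟨4 * j + r, rfl⟩, ?_⟩
    · have : 4 * j + r < 4 * g := by omega
      calc d * (4 * j + r) < d * (4 * g) := (Nat.mul_lt_mul_left hd).mpr this
      _ = 4 * d * g := by ring
      _ = n := hn.symm
    · rw [Nat.mul_div_cancel_left _ hd]
      omega

lemma sum_Mset (n d g r : ℕ) (hd : 0 < d) (hg : 0 < g) (hn : n = 4 * d * g) (hr : r < 4)
    (x : ℂ) (hx : x ^ n = 1) :
    ∑ q ∈ Mset n d r, x ^ q = (∑ j ∈ Finset.range g, (x ^ (4 * d)) ^ j) * x ^ (d * r) := by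
  rw [Mset_eq_image n d g r hd hn hr, Finset.sum_image, Finset.sum_mul]
  · apply Finset.sum_congr rfl
    intro j _
    rw [← pow_mul, ← pow_add]
    ring_nf
  · intro a _ b _ h
    have := Nat.eq_of_mul_eq_mul_left hd h
    omega

theorem stmt2 (n d g : ℕ) (hd : 0 < d) (hg : 0 < g) (hn : n = 4 * d * g)
    (x : ℂ) (hx : x ^ n = 1) :
    (∃ z : ℤ, ∑ q ∈ Mset n d 0, x ^ q = (z : ℂ)) ∧
    (∃ z : ℤ, ∑ q ∈ Mset n d 2, x ^ q = (z : ℂ)) := by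
  have hy : (x ^ (4 * d)) ^ g = 1 := by
    rw [← pow_mul, ← hn] at *
    · exact hx
  by_cases h1 : x ^ (4 * d) = 1
  · have hgeom : ∑ j ∈ Finset.range g, (x ^ (4 * d)) ^ j = (g : ℂ) := by
      simp [h1]
    constructor
    · exact ⟨g, by rw [sum_Mset n d g 0 hd hg hn (by norm_num) x hx, hgeom]; simp⟩
    · have hsq : (x ^ (2 * d) - 1) * (x ^ (2 * d) + 1) = 0 := by
        have : (x ^ (2 * d)) ^ 2 = 1 := by
          rw [← pow_mul]; rw [show 2 * d * 2 = 4 * d by ring]; exact h1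
        linear_combination this
      have hxd2 : x ^ (d * 2) = 1 ∨ x ^ (d * 2) = -1 := by
        rcases mul_eq_zero.mp hsq with h | h
        · left; rw [show d * 2 = 2 * d by ring]; linear_combination h
        · right; rw [show d * 2 = 2 * d by ring]; linear_combination h
      rcases hxd2 with h | h
      · exact ⟨g, by rw [sum_Mset n d g 2 hd hg hn (by norm_num) x hx, hgeom, h]; simp⟩
      · exact ⟨-g, by rw [sum_Mset n d g 2 hd hg hn (by norm_num) x hx, hgeom, h]; push_cast; ring⟩
  · have hgeom : ∑ j ∈ Finset.range g, (x ^ (4 * d)) ^ j = 0 := by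
      rw [geom_sum_eq h1, hy]
      simp
    refine ⟨⟨0, ?_⟩, ⟨0, ?_⟩⟩ <;>
      · rw [sum_Mset n d g _ hd hg hn (by norm_num) x hx, hgeom]; simp
end

section
/- Let n ≡ 0 (mod 4), n = 4dg, and let x be a complex number with x^n = 1. Then i·(∑_{q ∈ M_n^1(d)} x^q) − i·(∑_{q ∈ M_n^3(d)} x^q) is an integer. -/
open Finset

theorem stmt3 (n d g : ℕ) (hd : 0 < d) (hg : 0 < g) (hn : n = 4 * d * g)
    (x : ℂ) (hx : x ^ n = 1) :
    ∃ z : ℤ, Complex.I * (∑ q ∈ Mset n d 1, x ^ q) -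
      Complex.I * (∑ q ∈ Mset n d 3, x ^ q) = (z : ℂ) := by
  have him : ∀ r, r < 4 → Mset n d r = (Finset.range g).image (fun j => d * (4 * j + r)) := by
    intro r hr
    ext m
    simp only [Mset, Finset.mem_filter, Finset.mem_range, Finset.mem_image]
    constructor
    · rintro ⟨hm, ⟨k, rfl⟩, hmod⟩
      rw [Nat.mul_div_cancel_left _ hd] at hmod
      have hk : k < 4 * g := by
        by_contra h
        push_neg at h
        have : 4 * d * g ≤ d * k := by nlinarith
        omega
      exact ⟨k / 4, by omega, by rw [show 4 * (k / 4) + r = k by omega]⟩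
    · rintro ⟨j, hj, rfl⟩
      refine ⟨by subst hn; nlinarith, ⟨4 * j + r, rfl⟩, ?_⟩
      rw [Nat.mul_div_cancel_left _ hd]; omega
  have hsum : ∀ r, r < 4 → ∑ q ∈ Mset n d r, x ^ q
      = (∑ j ∈ Finset.range g, (x ^ (4 * d)) ^ j) * (x ^ d) ^ r := by
    intro r hr
    rw [him r hr, Finset.sum_image (by
      intro a _ b _ h
      have := Nat.eq_of_mul_eq_mul_left hd h
      omega)]
    rw [Finset.sum_mul]
    apply Finset.sum_congr rfl
    intro j _
    rw [← pow_mul, ← pow_mul, ← pow_add]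
    ring_nf
  rw [hsum 1 (by norm_num), hsum 3 (by norm_num)]
  set y : ℂ := x ^ d with hy
  have hy4 : x ^ (4 * d) = y ^ 4 := by rw [hy, ← pow_mul, mul_comm]
  rw [hy4]
  have hyg : (y ^ 4) ^ g = 1 := by
    rw [hy, ← pow_mul, ← pow_mul]
    rw [show d * (4 * g) = n by subst hn; ring, hx]
  by_cases h4 : y ^ 4 = 1
  · have hsq : (y ^ 2 - 1) * (y ^ 2 + 1) = 0 := by ring_nf; linear_combination h4
    rcases mul_eq_zero.mp hsq with h2 | h2
    · refine ⟨0, ?_⟩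
      have h2 : y ^ 2 = 1 := by linear_combination h2
      push_cast
      have : y ^ 3 = y := by
        calc y ^ 3 = y ^ 2 * y := by ring
        _ = y := by rw [h2]; ring
      rw [this]; ring
    · -- y^2 = -1
      have h2 : y ^ 2 = -1 := by linear_combination h2
      have hG : ∑ j ∈ Finset.range g, (y ^ 4) ^ j = (g : ℂ) := by
        rw [h4]; simp
      have hfac : (y - Complex.I) * (y + Complex.I) = 0 := by
        have : Complex.I ^ 2 = -1 := Complex.I_sq
        linear_combination h2 - this
      rcases mul_eq_zero.mp hfac with hyi | hyi
      · refine ⟨-2 * g, ?_⟩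
        have hyI : y = Complex.I := sub_eq_zero.mp hyi
        rw [hG, hyI]
        push_cast
        have hI2 : Complex.I ^ 2 = -1 := Complex.I_sq
        linear_combination (2 * (g : ℂ) - (g : ℂ) * Complex.I ^ 2) * hI2
      · refine ⟨2 * g, ?_⟩
        have hyI : y = -Complex.I := by
          have := add_eq_zero_iff_eq_neg.mp hyi
          exact this
        rw [hG, hyI]
        push_cast
        have hI2 : Complex.I ^ 2 = -1 := Complex.I_sq
        linear_combination ((g : ℂ) * Complex.I ^ 2 - 2 * (g : ℂ)) * hI2
  · refine ⟨0, ?_⟩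
    have hG : ∑ j ∈ Finset.range g, (y ^ 4) ^ j = 0 := by
      rw [geom_sum_eq h4, hyg]
      simp
    rw [hG]
    push_cast
    ring
end

section
/- Let n ≡ 0 (mod 4) and n = 4dg. Then M_n^1(d) = (⋃_{h ∈ D_g^1} G_n^1(hd)) ∪ (⋃_{h ∈ D_g^3} G_n^3(hd)), where D_g^r is the set of odd divisors of g congruent to r mod 4, and the unions are disjoint. -/
open Finset

/-- `G_n^r(d) = {dk : k ≡ r (mod 4), gcd(dk, n) = d}` (as a subset of `{1,…,n-1}`). -/
def Grset (n d r : ℕ) : Finset ℕ :=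
  (Finset.range n).filter (fun m => d ∣ m ∧ (m / d) % 4 = r ∧ Nat.gcd m n = d)

/-- `D_g^r` : odd divisors of `g` congruent to `r` mod 4. -/
def Dr (g r : ℕ) : Finset ℕ := g.divisors.filter (fun h => h % 4 = r)

lemma mod4_div {k h : ℕ} (hh : h ∣ k) (hk : k % 4 = 1) :
    (h % 4 = 1 ∧ (k / h) % 4 = 1) ∨ (h % 4 = 3 ∧ (k / h) % 4 = 3) := by
  obtain ⟨j, rfl⟩ := hh
  have hne : h ≠ 0 := by rintro rfl; simp at hk
  rw [Nat.mul_div_cancel_left _ (Nat.pos_of_ne_zero hne)]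
  have key : (h % 4) * (j % 4) % 4 = 1 := by rw [← Nat.mul_mod]; exact hk
  have ha : h % 4 < 4 := Nat.mod_lt _ (by norm_num)
  have hb : j % 4 < 4 := Nat.mod_lt _ (by norm_num)
  set a := h % 4
  set b := j % 4
  interval_cases a <;> interval_cases b <;> omega

lemma mod4_mul {h j : ℕ} {r : ℕ} (hr : r = 1 ∨ r = 3) (hh : h % 4 = r) (hj : j % 4 = r) :
    (h * j) % 4 = 1 := by
  rw [Nat.mul_mod, hh, hj]
  rcases hr with rfl | rfl <;> norm_num

theorem stmt6 (n d g : ℕ) (hd : 0 < d) (hg : 0 < g) (hn : n = 4 * d * g) :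
    Mset n d 1 =
      ((Dr g 1).biUnion fun h => Grset n (h * d) 1) ∪
      ((Dr g 3).biUnion fun h => Grset n (h * d) 3) ∧
    (∀ h₁ ∈ Dr g 1, ∀ h₂ ∈ Dr g 1, h₁ ≠ h₂ → Disjoint (Grset n (h₁ * d) 1) (Grset n (h₂ * d) 1)) ∧
    (∀ h₁ ∈ Dr g 3, ∀ h₂ ∈ Dr g 3, h₁ ≠ h₂ → Disjoint (Grset n (h₁ * d) 3) (Grset n (h₂ * d) 3)) ∧
    (∀ h₁ ∈ Dr g 1, ∀ h₂ ∈ Dr g 3, Disjoint (Grset n (h₁ * d) 1) (Grset n (h₂ * d) 3)) := by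
  refine ⟨?_, ?_, ?_, ?_⟩
  · ext m
    simp only [Mset, Grset, Dr, mem_union, mem_biUnion, mem_filter, mem_range, Nat.mem_divisors]
    constructor
    · rintro ⟨hmn, ⟨k, rfl⟩, hk4⟩
      rw [Nat.mul_div_cancel_left _ hd] at hk4
      set h := Nat.gcd k g with hh
      have hdvg : h ∣ g := Nat.gcd_dvd_right k g
      have hdvk : h ∣ k := Nat.gcd_dvd_left k g
      have hk0 : k ≠ 0 := by rintro rfl; simp at hk4
      have hne : h ≠ 0 := by
        simp [hh, Nat.gcd_eq_zero_iff, hk0]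
      have hc : Nat.Coprime k 4 := by
        have h2 : k % 2 = 1 := by omega
        have : Nat.Coprime k 2 := Nat.coprime_two_right.mpr (Nat.odd_iff.mpr h2)
        simpa using this.pow_right 2
      have hgcd : Nat.gcd (d * k) n = h * d := by
        rw [hn, show 4 * d * g = d * (4 * g) by ring, Nat.gcd_mul_left]
        have hkey : Nat.gcd k (4 * g) = Nat.gcd k g := by
          apply Nat.dvd_antisymm
          · refine Nat.dvd_gcd (Nat.gcd_dvd_left _ _) ?_
            have hce : Nat.Coprime (Nat.gcd k (4 * g)) 4 :=
              Nat.Coprime.coprime_dvd_left (Nat.gcd_dvd_left _ _) hc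
            exact hce.dvd_of_dvd_mul_left (Nat.gcd_dvd_right _ _)
          · exact Nat.dvd_gcd (Nat.gcd_dvd_left _ _)
              ((Nat.gcd_dvd_right _ _).trans (Dvd.intro 4 (Nat.mul_comm g 4)))
        rw [hkey, ← hh, Nat.mul_comm]
      have hdvd : h * d ∣ d * k := by
        rw [Nat.mul_comm d k]; exact Nat.mul_dvd_mul hdvk dvd_rfl
      have hdiv : (d * k) / (h * d) = k / h := by
        rw [Nat.mul_comm h d, Nat.mul_div_mul_left _ _ hd]
      rcases mod4_div hdvk hk4 with ⟨h1, h2⟩ | ⟨h1, h2⟩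
      · exact Or.inl ⟨h, ⟨⟨hdvg, hg.ne'⟩, h1⟩, hmn, hdvd, by rw [hdiv]; exact h2, hgcd⟩
      · exact Or.inr ⟨h, ⟨⟨hdvg, hg.ne'⟩, h1⟩, hmn, hdvd, by rw [hdiv]; exact h2, hgcd⟩
    · rintro (⟨h, ⟨⟨hhg, -⟩, hh4⟩, hmn, hdvd, hmod, -⟩ | ⟨h, ⟨⟨hhg, -⟩, hh4⟩, hmn, hdvd, hmod, -⟩) <;>
      · obtain ⟨j, rfl⟩ := hdvd
        have hne : h ≠ 0 := by rintro rfl; simp at hh4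
        rw [Nat.mul_div_cancel_left _ (by positivity)] at hmod
        refine ⟨hmn, ⟨h * j, by ring⟩, ?_⟩
        rw [show h * d * j = d * (h * j) by ring, Nat.mul_div_cancel_left _ hd]
        first
          | exact mod4_mul (Or.inl rfl) hh4 hmod
          | exact mod4_mul (Or.inr rfl) hh4 hmod
  · intro h₁ _ h₂ _ hne
    rw [Finset.disjoint_left]
    intro m hm1 hm2
    simp only [Grset, mem_filter] at hm1 hm2
    exact hne (Nat.eq_of_mul_eq_mul_right hd (hm1.2.2.2.symm.trans hm2.2.2.2))
  · intro h₁ _ h₂ _ hne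
    rw [Finset.disjoint_left]
    intro m hm1 hm2
    simp only [Grset, mem_filter] at hm1 hm2
    exact hne (Nat.eq_of_mul_eq_mul_right hd (hm1.2.2.2.symm.trans hm2.2.2.2))
  · intro h₁ _ h₂ _
    rw [Finset.disjoint_left]
    intro m hm1 hm2
    simp only [Grset, mem_filter] at hm1 hm2
    have heq : h₁ * d = h₂ * d := hm1.2.2.2.symm.trans hm2.2.2.2
    rw [heq] at hm1
    omega
end

section
/- Let n ≡ 0 (mod 4) and let d be any divisor of n/4. If x is a complex number with x^n = 1, then ∑_{q ∈ G_n^1(d)} i x^q − ∑_{q ∈ G_n^3(d)} i x^q is an integer. -/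
/-!
Write `N = n / d`; then `G_n^r(d) = d · {k < N : k ≡ r (mod 4), gcd(k, N) = 1}` and `4 ∣ N`.
With `z = i x^d` we have `z^N = 1` and `i x^{dk} = i^{1-k} z^k = ± z^k` according as `k ≡ 1` or
`k ≡ 3 (mod 4)`. Since every `k` coprime to `N` is odd, the difference in question is the
Ramanujan sum `∑_{gcd(k, N) = 1} z^k`, which by Möbius inversion equals
`∑_{e ∣ N} μ(e) ∑_{j < N/e} (z^e)^j`, an integer because each geometric sum is `N/e` or `0`.
-/

open Finset

open ArithmeticFunction ArithmeticFunction.Moebius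

theorem ArithmeticFunction.sum_divisors_moebius (n : ℕ) :
    ∑ e ∈ n.divisors, μ e = if n = 1 then 1 else 0 := by
  rw [← coe_mul_zeta_apply (f := μ), moebius_mul_coe_zeta, one_apply]

theorem Nat.filter_dvd_divisors {N : ℕ} (hN : N ≠ 0) (k : ℕ) :
    {e ∈ N.divisors | e ∣ k} = (Nat.gcd k N).divisors := by
  ext e
  simp only [mem_filter, Nat.mem_divisors, Nat.dvd_gcd_iff, ne_eq, Nat.gcd_eq_zero_iff, hN,
    and_false, not_false_eq_true, and_true]
  tauto

theorem Finset.sum_filter_coprime_eq_sum_moebius {M : Type*} [AddCommGroup M] (s : Finset ℕ)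
    (f : ℕ → M) {N : ℕ} (hN : N ≠ 0) :
    ∑ k ∈ s with k.Coprime N, f k = ∑ e ∈ N.divisors, μ e • ∑ k ∈ s with e ∣ k, f k := by
  simp_rw [smul_sum, sum_filter]
  rw [sum_comm]
  refine sum_congr rfl fun k _ => ?_
  rw [← sum_filter, ← sum_smul, Nat.filter_dvd_divisors hN, sum_divisors_moebius]
  split_ifs <;> simp_all [Nat.Coprime]

theorem Finset.sum_range_filter_dvd {M : Type*} [AddCommMonoid M] (f : ℕ → M) {e N : ℕ}
    (he : e ∣ N) :
    ∑ k ∈ range N with e ∣ k, f k = ∑ j ∈ range (N / e), f (e * j) := by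
  rcases Nat.eq_zero_or_pos e with rfl | he0
  · simp [Nat.eq_zero_of_zero_dvd he]
  symm
  refine sum_nbij' (e * ·) (· / e) (fun j hj => ?_) (fun k hk => ?_) (fun j _ => ?_)
    (fun k hk => ?_) (fun _ _ => rfl)
  · simp only [mem_filter, mem_range] at hj ⊢
    exact ⟨(Nat.lt_div_iff_mul_lt' he j).mp hj, dvd_mul_right e j⟩
  · simp only [mem_filter, mem_range] at hk ⊢
    exact Nat.div_lt_div_of_lt_of_dvd he hk.1
  · exact Nat.mul_div_cancel_left j he0
  · exact Nat.mul_div_cancel' (mem_filter.mp hk).2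

theorem geom_sum_of_pow_eq_one {R : Type*} [CommRing R] [IsDomain R] [DecidableEq R]
    {w : R} {M : ℕ} (hw : w ^ M = 1) : ∑ j ∈ range M, w ^ j = if w = 1 then (M : R) else 0 := by
  split_ifs with h
  · simp [h]
  · have := geom_sum_mul w M
    rw [hw, sub_self, mul_eq_zero] at this
    exact this.resolve_right (sub_ne_zero.mpr h)

theorem sum_coprime_pow_eq_sum_moebius {R : Type*} [CommRing R] [IsDomain R] [DecidableEq R]
    {z : R} {N : ℕ} (hN : N ≠ 0) (hz : z ^ N = 1) :
    ∑ k ∈ range N with k.Coprime N, z ^ k =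
      ((∑ e ∈ N.divisors, μ e * if z ^ e = 1 then ((N / e : ℕ) : ℤ) else 0 : ℤ) : R) := by
  rw [sum_filter_coprime_eq_sum_moebius _ _ hN, Int.cast_sum]
  refine sum_congr rfl fun e he => ?_
  have he : e ∣ N := Nat.dvd_of_mem_divisors he
  have hze : (z ^ e) ^ (N / e) = 1 := by rw [← pow_mul, Nat.mul_div_cancel' he, hz]
  simp_rw [sum_range_filter_dvd _ he, pow_mul, geom_sum_of_pow_eq_one hze, zsmul_eq_mul]
  split_ifs <;> simp only [mul_zero, Int.cast_mul, Int.cast_natCast, Int.cast_zero]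

theorem Finset.sum_filter_coprime_eq_add_of_two_dvd {M : Type*} [AddCommMonoid M]
    (s : Finset ℕ) (f : ℕ → M) {N : ℕ} (hN : 2 ∣ N) :
    ∑ k ∈ s with k.Coprime N, f k =
      ∑ k ∈ s with k % 4 = 1 ∧ k.Coprime N, f k + ∑ k ∈ s with k % 4 = 3 ∧ k.Coprime N, f k := by
  have hodd : ∀ k, k.Coprime N → k % 2 = 1 := fun k hk =>
    Nat.odd_iff.mp (Nat.coprime_two_right.mp (hk.coprime_dvd_right hN))
  rw [← sum_filter_add_sum_filter_not _ (· % 4 = 1), filter_filter, filter_filter]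
  congr 2 <;> ext k <;> simp only [mem_filter, and_congr_right_iff] <;> intro _
  · exact and_comm
  · constructor
    · rintro ⟨hk, h1⟩; have := hodd k hk; exact ⟨by omega, hk⟩
    · rintro ⟨h3, hk⟩; exact ⟨hk, by omega⟩

theorem Grset_eq_image {n d : ℕ} (hdn : d ∣ n) (hd0 : 0 < d) (r : ℕ) :
    Grset n d r = {k ∈ range (n / d) | k % 4 = r ∧ k.Coprime (n / d)}.image (d * ·) := by
  have hN : d * (n / d) = n := Nat.mul_div_cancel' hdn
  ext m
  simp only [Grset, mem_filter, mem_range, mem_image]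
  constructor
  · rintro ⟨hm, ⟨k, rfl⟩, hk4, hg⟩
    rw [Nat.mul_div_cancel_left _ hd0] at hk4
    rw [← hN, Nat.gcd_mul_left] at hg
    refine ⟨k, ⟨?_, hk4, ?_⟩, rfl⟩
    · rw [← hN] at hm; exact Nat.lt_of_mul_lt_mul_left hm
    · exact Nat.eq_of_mul_eq_mul_left hd0 (hg.trans (mul_one d).symm)
  · rintro ⟨k, ⟨hk, hk4, hg⟩, rfl⟩
    refine ⟨?_, dvd_mul_right d k, by rwa [Nat.mul_div_cancel_left _ hd0], ?_⟩
    · rw [← hN]; exact Nat.mul_lt_mul_of_pos_left hk hd0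
    · rw [← hN, Nat.gcd_mul_left, hg, mul_one]

namespace Complex

theorem I_mul_pow_mul_of_mod_four_eq_one (x : ℂ) (d : ℕ) {k : ℕ} (hk : k % 4 = 1) :
    I * x ^ (d * k) = (I * x ^ d) ^ k := by
  rw [mul_pow, I_pow_eq_pow_mod, hk, pow_one, pow_mul]

theorem I_mul_pow_mul_of_mod_four_eq_three (x : ℂ) (d : ℕ) {k : ℕ} (hk : k % 4 = 3) :
    I * x ^ (d * k) = -(I * x ^ d) ^ k := by
  rw [mul_pow, I_pow_eq_pow_mod, hk, I_pow_three, pow_mul, neg_mul, neg_neg]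

end Complex

theorem stmt7 (n d : ℕ) (hn : 0 < n) (h4 : n % 4 = 0) (hd : d ∣ n / 4)
    (x : ℂ) (hx : x ^ n = 1) :
    ∃ z : ℤ, (∑ q ∈ Grset n d 1, Complex.I * x ^ q) -
      (∑ q ∈ Grset n d 3, Complex.I * x ^ q) = (z : ℂ) := by
  have h4n : 4 ∣ n := Nat.dvd_of_mod_eq_zero h4
  have hdn : d ∣ n := hd.trans (Nat.div_dvd_of_dvd h4n)
  have hd0 : 0 < d := Nat.pos_of_dvd_of_pos hdn hn
  have h4N : 4 ∣ n / d := Nat.dvd_div_of_mul_dvd (mul_comm 4 d ▸ Nat.mul_dvd_of_dvd_div h4n hd)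
  have hN : n / d ≠ 0 := (Nat.div_pos (Nat.le_of_dvd hn hdn) hd0).ne'
  have hz : (Complex.I * x ^ d) ^ (n / d) = 1 := by
    obtain ⟨t, ht⟩ := h4N
    rw [mul_pow, ← pow_mul, Nat.mul_div_cancel' hdn, hx, ht, pow_mul, Complex.I_pow_four,
      one_pow, one_mul]
  refine ⟨_, Eq.trans ?_ (sum_coprime_pow_eq_sum_moebius hN hz)⟩
  have hinj : Function.Injective (d * ·) := mul_right_injective₀ hd0.ne'
  rw [sum_filter_coprime_eq_add_of_two_dvd _ _ ((by norm_num : 2 ∣ 4).trans h4N),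
    Grset_eq_image hdn hd0, Grset_eq_image hdn hd0, sum_image hinj.injOn, sum_image hinj.injOn,
    sub_eq_add_neg, ← sum_neg_distrib]
  congr 1 <;> refine sum_congr rfl fun k hk => ?_
  · exact Complex.I_mul_pow_mul_of_mod_four_eq_one x d (mem_filter.mp hk).2.1
  · rw [Complex.I_mul_pow_mul_of_mod_four_eq_three x d (mem_filter.mp hk).2.1, neg_neg]
end

section
/- Let n ≡ 0 (mod 4). Then the polynomials Φ_n^1(x) and Φ_n^3(x) are monic of degree φ(n)/2 and have all coefficients in ℤ[i], and Φ_n(x) = Φ_n^1(x)·Φ_n^3(x) where Φ_n is the n-th cyclotomic polynomial. -/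
open Finset Polynomial

/-! Write `ζ = e^{2πi/n}`, so that `(ζ^a)^{n/4} = i^a`. For odd `a` this is `i` or `-i` according
as `a ≡ 1` or `3 (mod 4)`, hence `Φ_n^1 = gcd(Φ_n, X^{n/4} - i)` in `ℂ[X]`. Both polynomials are
defined over `ℚ(i)` and the Euclidean gcd commutes with field extensions, so `Φ_n^1` has
coefficients in `ℚ(i)`; as a monic factor of `Φ_n ∈ ℤ[X]` its coefficients are also algebraic
integers, hence lie in `ℤ[i]`. Complex conjugation, i.e. `a ↦ n - a` on exponents, exchanges
`Φ_n^1` and `Φ_n^3`, which gives equal degrees and the claim for `Φ_n^3`. -/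

/-- `G_n^r(1) = {a : 1 ≤ a ≤ n-1, gcd(a,n)=1, a ≡ r (mod 4)}`. -/
def Grone (n r : ℕ) : Finset ℕ :=
  (Finset.range n).filter (fun a => 1 ≤ a ∧ Nat.gcd a n = 1 ∧ a % 4 = r)

/-- `Φ_n^r(x) = ∏_{a ∈ G_n^r(1)} (x − e^{2πia/n})`. -/
noncomputable def Phir (n r : ℕ) : Polynomial ℂ :=
  ∏ a ∈ Grone n r, (X - C (Complex.exp (2 * Real.pi * Complex.I * a / n)))

lemma IsPrimitiveRoot.primitiveRoots_eq_image_pow {R : Type*} [CommRing R] [IsDomain R]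
    [DecidableEq R] {ζ : R} {n : ℕ} (hζ : IsPrimitiveRoot ζ n) :
    primitiveRoots n R = ((range n).filter (·.Coprime n)).image (ζ ^ ·) := by
  rcases Nat.eq_zero_or_pos n with rfl | hn
  · simp
  have : NeZero n := ⟨hn.ne'⟩
  ext μ
  simp only [mem_primitiveRoots hn, mem_image, mem_filter, mem_range]
  constructor
  · intro hμ
    obtain ⟨a, ha, rfl⟩ := hζ.eq_pow_of_pow_eq_one hμ.pow_eq_one
    exact ⟨a, ⟨ha, (hζ.pow_iff_coprime hn a).mp hμ⟩, rfl⟩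
  · rintro ⟨a, ⟨-, ha⟩, rfl⟩
    exact (hζ.pow_iff_coprime hn a).mpr ha

lemma IsPrimitiveRoot.cyclotomic_eq_prod_X_sub_C_pow {R : Type*} [CommRing R] [IsDomain R]
    {ζ : R} {n : ℕ} (hζ : IsPrimitiveRoot ζ n) :
    cyclotomic n R = ∏ a ∈ (range n).filter (·.Coprime n), (X - C (ζ ^ a)) := by
  classical
  rw [cyclotomic_eq_prod_X_sub_primitiveRoots hζ, hζ.primitiveRoots_eq_image_pow, prod_image]
  intro a ha b hb hab
  exact hζ.pow_inj (mem_range.1 (mem_filter.1 ha).1) (mem_range.1 (mem_filter.1 hb).1) hab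

lemma conj_pow_eq_pow_sub {ζ : ℂ} {n a : ℕ} (hζ : ζ ^ n = 1) (hn : n ≠ 0) (ha : a ≤ n) :
    starRingEnd ℂ (ζ ^ a) = ζ ^ (n - a) := by
  have hnorm : ‖ζ ^ a‖ = 1 := by rw [norm_pow, Complex.norm_eq_one_of_pow_eq_one hζ hn, one_pow]
  rw [← Complex.inv_eq_conj hnorm]
  exact inv_eq_of_mul_eq_one_left (by rw [← pow_add, Nat.sub_add_cancel ha, hζ])

lemma Polynomial.mem_lifts_of_associated_gcd_map {K L : Type*} [Field K] [Field L]
    [DecidableEq K] [DecidableEq L] (f : K →+* L) {p q : K[X]} {g : L[X]} (hg : g.Monic)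
    (h : Associated g (EuclideanDomain.gcd (p.map f) (q.map f))) : g ∈ lifts f := by
  rw [gcd_map] at h
  have hd : EuclideanDomain.gcd p q ≠ 0 := by
    rintro hd
    rw [hd, Polynomial.map_zero, associated_zero_iff_eq_zero] at h
    exact hg.ne_zero h
  refine (mem_lifts g).2 ⟨_, eq_of_monic_of_associated ((monic_normalize hd).map f) hg ?_⟩
  exact ((normalize_associated _).map (mapRingHom f)).trans h.symm

lemma Int.sq_emod_four_eq_zero_of_even {x : ℤ} (hx : Even x) : x ^ 2 % 4 = 0 := by
  obtain ⟨r, rfl⟩ := hx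
  rw [show (r + r) ^ 2 = 4 * r ^ 2 by ring, Int.mul_emod_right]

lemma Int.even_of_sq_add_sq_eq_four_mul {x y z : ℤ} (h : x ^ 2 + y ^ 2 = 4 * z) :
    Even x ∧ Even y := by
  rcases Int.even_or_odd x with hx | hx <;> rcases Int.even_or_odd y with hy | hy
  · exact ⟨hx, hy⟩
  · have := Int.sq_emod_four_eq_zero_of_even hx; have := Int.sq_mod_four_eq_one_of_odd hy; omega
  · have := Int.sq_mod_four_eq_one_of_odd hx; have := Int.sq_emod_four_eq_zero_of_even hy; omega
  · have := Int.sq_mod_four_eq_one_of_odd hx; have := Int.sq_mod_four_eq_one_of_odd hy; omega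

lemma exists_int_eq_of_isIntegral_ratCast {q : ℚ} (h : IsIntegral ℤ (q : ℂ)) :
    ∃ m : ℤ, (m : ℚ) = q :=
  IsIntegrallyClosed.isIntegral_iff.mp
    ((isIntegral_algHom_iff (Algebra.ofId ℚ ℂ).toIntAlgHom (algebraMap ℚ ℂ).injective).mp h)

/-- The trace `2a`, the norm `a² + b²` and `2b` are integral rationals, hence integers, and
`(2a)² + (2b)² ≡ 0 (mod 4)` forces `2a` and `2b` to be even. -/
lemma exists_int_of_isIntegral_ratCast_add_mul_I {a b : ℚ}
    (h : IsIntegral ℤ ((a : ℂ) + b * Complex.I)) :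
    ∃ x y : ℤ, (a : ℂ) + b * Complex.I = x + y * Complex.I := by
  have hconj : IsIntegral ℤ ((a : ℂ) - b * Complex.I) := by
    simpa [sub_eq_add_neg] using h.map (starRingEnd ℂ).toIntAlgHom
  obtain ⟨u, hu⟩ : ∃ u : ℤ, (u : ℚ) = 2 * a := exists_int_eq_of_isIntegral_ratCast <| by
    rw [show ((2 * a : ℚ) : ℂ) = (a + b * Complex.I) + (a - b * Complex.I) by push_cast; ring]
    exact h.add hconj
  obtain ⟨v, hv⟩ : ∃ v : ℤ, (v : ℚ) = 2 * b := exists_int_eq_of_isIntegral_ratCast <| by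
    rw [show ((2 * b : ℚ) : ℂ) = ((a + b * Complex.I) - (a - b * Complex.I)) * -Complex.I by
      push_cast; linear_combination 2 * (b : ℂ) * Complex.I_sq]
    exact (h.sub hconj).mul Complex.isIntegral_int_I.neg
  obtain ⟨w, hw⟩ : ∃ w : ℤ, (w : ℚ) = a ^ 2 + b ^ 2 := exists_int_eq_of_isIntegral_ratCast <| by
    rw [show ((a ^ 2 + b ^ 2 : ℚ) : ℂ) = (a + b * Complex.I) * (a - b * Complex.I) by
      push_cast; linear_combination (b : ℂ) ^ 2 * Complex.I_sq]
    exact h.mul hconj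
  have hsq : u ^ 2 + v ^ 2 = 4 * w := by
    have : (u : ℚ) ^ 2 + (v : ℚ) ^ 2 = 4 * w := by rw [hu, hv, hw]; ring
    exact_mod_cast this
  obtain ⟨⟨x, rfl⟩, ⟨y, rfl⟩⟩ := Int.even_of_sq_add_sq_eq_four_mul hsq
  refine ⟨x, y, ?_⟩
  have hx : (x : ℂ) = a := by exact_mod_cast (by push_cast at hu; linarith : (x : ℚ) = a)
  have hy : (y : ℂ) = b := by exact_mod_cast (by push_cast at hv; linarith : (y : ℚ) = b)
  rw [hx, hy]

/-- `ℚ(i)`, as `ℚ[ω]` with `ω² = -1`. -/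
abbrev GaussRat := QuadraticAlgebra ℚ (-1) 0

instance : Fact (∀ r : ℚ, r ^ 2 ≠ -1 + 0 * r) := ⟨fun r => by nlinarith [sq_nonneg r]⟩

noncomputable def GaussRat.toComplex : GaussRat →ₐ[ℚ] ℂ :=
  QuadraticAlgebra.lift ⟨Complex.I, by simp⟩

lemma GaussRat.toComplex_apply (z : GaussRat) :
    GaussRat.toComplex z = z.re + z.im * Complex.I := by
  change z.re • (1 : ℂ) + z.im • Complex.I = _
  simp [Rat.smul_def]

lemma filter_coprime_eq_Grone_one_union_three {n : ℕ} (h2 : 2 ∣ n) :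
    (range n).filter (·.Coprime n) = Grone n 1 ∪ Grone n 3 := by
  ext a
  simp only [Grone, mem_union, mem_filter, mem_range, Nat.Coprime]
  refine ⟨fun ⟨han, ha⟩ => ?_, by rintro (⟨han, -, ha, -⟩ | ⟨han, -, ha, -⟩) <;> exact ⟨han, ha⟩⟩
  have ha0 : a ≠ 0 := by rintro rfl; rw [Nat.gcd_zero_left] at ha; omega
  have hodd : ¬ 2 ∣ a := fun h => by simpa [ha] using Nat.dvd_gcd h h2
  omega

lemma disjoint_Grone_one_three (n : ℕ) : Disjoint (Grone n 1) (Grone n 3) := by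
  rw [disjoint_left]
  intro a ha hb
  simp only [Grone, mem_filter] at ha hb
  omega

lemma sub_mem_Grone {n r s a : ℕ} (h4 : 4 ∣ n) (hs : s < 4) (hrs : 4 ∣ r + s)
    (ha : a ∈ Grone n r) : n - a ∈ Grone n s := by
  simp only [Grone, mem_filter, mem_range] at ha ⊢
  obtain ⟨han, ha1, hcop, rfl⟩ := ha
  exact ⟨by omega, by omega, (Nat.gcd_self_sub_left han.le).trans hcop, by omega⟩

noncomputable def zeta (n : ℕ) : ℂ := Complex.exp (2 * Real.pi * Complex.I / n)

lemma isPrimitiveRoot_zeta {n : ℕ} (hn : n ≠ 0) : IsPrimitiveRoot (zeta n) n :=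
  Complex.isPrimitiveRoot_exp n hn

lemma zeta_pow_div_four {n : ℕ} (hn : n ≠ 0) (h4 : 4 ∣ n) : zeta n ^ (n / 4) = Complex.I := by
  obtain ⟨m, rfl⟩ := h4
  have hm : (m : ℂ) ≠ 0 := by exact_mod_cast (by omega : m ≠ 0)
  rw [zeta, ← Complex.exp_nat_mul, Nat.mul_div_cancel_left m four_pos]
  convert Complex.exp_pi_div_two_mul_I using 2
  push_cast
  field_simp
  ring

lemma pow_div_four_zeta_pow {n : ℕ} (hn : n ≠ 0) (h4 : 4 ∣ n) (a : ℕ) :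
    (zeta n ^ a) ^ (n / 4) = Complex.I ^ (a % 4) := by
  rw [← pow_mul, mul_comm, pow_mul, zeta_pow_div_four hn h4, pow_eq_pow_mod a Complex.I_pow_four]

lemma Phir_eq_prod_zeta_pow (n r : ℕ) : Phir n r = ∏ a ∈ Grone n r, (X - C (zeta n ^ a)) := by
  refine prod_congr rfl fun a _ => ?_
  rw [zeta, ← Complex.exp_nat_mul, mul_div_assoc', mul_comm (a : ℂ)]

lemma monic_Phir (n r : ℕ) : (Phir n r).Monic :=
  monic_prod_of_monic _ _ fun _ _ => monic_X_sub_C _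

lemma cyclotomic_eq_Phir_one_mul_Phir_three {n : ℕ} (hn : n ≠ 0) (h4 : 4 ∣ n) :
    cyclotomic n ℂ = Phir n 1 * Phir n 3 := by
  rw [(isPrimitiveRoot_zeta hn).cyclotomic_eq_prod_X_sub_C_pow,
    filter_coprime_eq_Grone_one_union_three (dvd_trans (by norm_num) h4),
    prod_union (disjoint_Grone_one_three n), Phir_eq_prod_zeta_pow, Phir_eq_prod_zeta_pow]

lemma map_conj_Phir_one {n : ℕ} (hn : n ≠ 0) (h4 : 4 ∣ n) :
    (Phir n 1).map (starRingEnd ℂ) = Phir n 3 := by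
  rw [Phir_eq_prod_zeta_pow, Phir_eq_prod_zeta_pow, Polynomial.map_prod]
  have hlt {r a : ℕ} (ha : a ∈ Grone n r) : a < n := mem_range.1 (mem_filter.1 ha).1
  refine prod_nbij' (n - ·) (n - ·) (fun a ha => sub_mem_Grone h4 (by norm_num) (by norm_num) ha)
    (fun a ha => sub_mem_Grone h4 (by norm_num) (by norm_num) ha)
    (fun a ha => Nat.sub_sub_self (hlt ha).le) (fun a ha => Nat.sub_sub_self (hlt ha).le)
    fun a ha => ?_
  rw [Polynomial.map_sub, map_X, map_C,
    conj_pow_eq_pow_sub (isPrimitiveRoot_zeta hn).pow_eq_one hn (hlt ha).le]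

lemma Phir_one_dvd_X_pow_sub_I {n : ℕ} (hn : n ≠ 0) (h4 : 4 ∣ n) :
    Phir n 1 ∣ X ^ (n / 4) - C Complex.I := by
  have hζ := isPrimitiveRoot_zeta hn
  rw [Phir_eq_prod_zeta_pow]
  refine prod_dvd_of_coprime (fun a ha b hb hab => isCoprime_X_sub_C_of_isUnit_sub ?_) fun a ha => ?_
  · simp only [Grone, coe_filter, mem_range, Set.mem_ofPred_eq] at ha hb
    exact (sub_ne_zero.2 fun h => hab (hζ.pow_inj ha.1 hb.1 h)).isUnit
  · simp only [Grone, mem_filter] at ha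
    rw [dvd_iff_isRoot, IsRoot, eval_sub, eval_pow, eval_X, eval_C, pow_div_four_zeta_pow hn h4,
      ha.2.2.2, pow_one, sub_self]

lemma isCoprime_X_pow_sub_I_Phir_three {n : ℕ} (hn : n ≠ 0) (h4 : 4 ∣ n) :
    IsCoprime (X ^ (n / 4) - C Complex.I) (Phir n 3) := by
  rw [Phir_eq_prod_zeta_pow]
  refine IsCoprime.prod_right fun a ha => ?_
  simp only [Grone, mem_filter] at ha
  rw [isCoprime_comm, (prime_X_sub_C _).coprime_iff_not_dvd, dvd_iff_isRoot, IsRoot, eval_sub,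
    eval_pow, eval_X, eval_C, pow_div_four_zeta_pow hn h4, ha.2.2.2, sub_eq_zero]
  intro h
  have : (2 : ℂ) * Complex.I = 0 := by linear_combination -h + Complex.I * Complex.I_sq
  simp at this

lemma associated_Phir_one_gcd {n : ℕ} (hn : n ≠ 0) (h4 : 4 ∣ n) :
    Associated (Phir n 1) (EuclideanDomain.gcd (cyclotomic n ℂ) (X ^ (n / 4) - C Complex.I)) := by
  rw [cyclotomic_eq_Phir_one_mul_Phir_three hn h4]
  refine associated_of_dvd_dvd
    (EuclideanDomain.dvd_gcd (dvd_mul_right _ _) (Phir_one_dvd_X_pow_sub_I hn h4)) ?_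
  exact ((isCoprime_X_pow_sub_I_Phir_three hn h4).of_isCoprime_of_dvd_left
    (EuclideanDomain.gcd_dvd_right _ _)).dvd_of_dvd_mul_right (EuclideanDomain.gcd_dvd_left _ _)

lemma Phir_one_mem_lifts_toComplex {n : ℕ} (hn : n ≠ 0) (h4 : 4 ∣ n) :
    Phir n 1 ∈ lifts (GaussRat.toComplex : GaussRat →+* ℂ) := by
  classical
  refine mem_lifts_of_associated_gcd_map _ (monic_Phir n 1)
    (p := cyclotomic n GaussRat) (q := X ^ (n / 4) - C QuadraticAlgebra.omega) ?_
  have hω : GaussRat.toComplex QuadraticAlgebra.omega = Complex.I := by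
    simp [GaussRat.toComplex_apply]
  simpa [map_cyclotomic, hω] using associated_Phir_one_gcd hn h4

lemma isIntegral_coeff_Phir_one {n : ℕ} (hn : n ≠ 0) (h4 : 4 ∣ n) (k : ℕ) :
    IsIntegral ℤ ((Phir n 1).coeff k) := by
  refine isIntegral_coeff_of_dvd _ _ (cyclotomic.monic n ℤ) (monic_Phir n 1) ?_ k
  rw [map_cyclotomic, cyclotomic_eq_Phir_one_mul_Phir_three hn h4]
  exact dvd_mul_right _ _

lemma exists_int_coeff_Phir_one {n : ℕ} (hn : n ≠ 0) (h4 : 4 ∣ n) (k : ℕ) :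
    ∃ a b : ℤ, (Phir n 1).coeff k = a + b * Complex.I := by
  obtain ⟨z, hz⟩ := (lifts_iff_coeff_lifts _).1 (Phir_one_mem_lifts_toComplex hn h4) k
  have hint := isIntegral_coeff_Phir_one hn h4 k
  rw [← hz, RingHom.coe_coe, GaussRat.toComplex_apply] at hint ⊢
  exact exists_int_of_isIntegral_ratCast_add_mul_I hint

theorem stmt10 (n : ℕ) (hn : 0 < n) (h4 : n % 4 = 0) :
    (Phir n 1).Monic ∧ (Phir n 3).Monic ∧
    2 * (Phir n 1).natDegree = Nat.totient n ∧
    2 * (Phir n 3).natDegree = Nat.totient n ∧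
    (∀ k : ℕ, ∃ a b : ℤ, (Phir n 1).coeff k = (a : ℂ) + (b : ℂ) * Complex.I) ∧
    (∀ k : ℕ, ∃ a b : ℤ, (Phir n 3).coeff k = (a : ℂ) + (b : ℂ) * Complex.I) ∧
    Polynomial.cyclotomic n ℂ = Phir n 1 * Phir n 3 := by
  replace hn : n ≠ 0 := hn.ne'
  replace h4 : 4 ∣ n := Nat.dvd_of_mod_eq_zero h4
  have hcyc := cyclotomic_eq_Phir_one_mul_Phir_three hn h4
  have hconj := map_conj_Phir_one hn h4
  have hdeg : (Phir n 3).natDegree = (Phir n 1).natDegree := by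
    rw [← hconj, natDegree_map_eq_of_injective (starRingEnd ℂ).injective]
  have hsum : (Phir n 1).natDegree + (Phir n 3).natDegree = n.totient := by
    rw [← (monic_Phir n 1).natDegree_mul (monic_Phir n 3), ← hcyc, natDegree_cyclotomic]
  refine ⟨monic_Phir n 1, monic_Phir n 3, by omega, by omega,
    exists_int_coeff_Phir_one hn h4, fun k => ?_, hcyc⟩
  obtain ⟨a, b, hab⟩ := exists_int_coeff_Phir_one hn h4 k
  refine ⟨a, -b, ?_⟩
  rw [← hconj, coeff_map, hab]
  simp
end

section
/- If n ≢ 0 (mod 4), then the n-th cyclotomic polynomial Φ_n(x) is irreducible over ℚ(i); if n ≡ 0 (mod 4) (and n ≥ 4), then Φ_n(x) is reducible over ℚ(i). -/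
open Polynomial

/-- The field `ℚ(i)`, realized as an intermediate field of `ℂ/ℚ`. -/
noncomputable def QI : IntermediateField ℚ ℂ := IntermediateField.adjoin ℚ {Complex.I}

/-!
Let `ζ` be a primitive `n`-th root of unity. `Φ_n` is irreducible over `ℚ(i)` iff
`[ℚ(i, ζ) : ℚ(i)] = φ(n)`. Since `ℚ(i, ζ)` is the `lcm(4, n)`-th cyclotomic field, the tower law
gives `2 · [ℚ(i, ζ) : ℚ(i)] = φ(lcm(4, n))`, which is `2 φ(n)` when `4 ∤ n` and `φ(n)` when `4 ∣ n`.
-/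

open IntermediateField Module

theorem Nat.totient_lcm_four_of_not_four_dvd {n : ℕ} (h : ¬ 4 ∣ n) :
    (Nat.lcm 4 n).totient = 2 * n.totient := by
  rcases Nat.even_or_odd n with ⟨k, rfl⟩ | hodd
  · have hk : Odd k := by
      rw [Nat.odd_iff]; omega
    have hlcm : Nat.lcm 4 (k + k) = 2 * (k + k) := by
      rw [show (4 : ℕ) = 2 * 2 by rfl, show k + k = 2 * k by ring, Nat.lcm_mul_left,
        (Nat.coprime_two_left.2 hk).lcm_eq_mul]
    rw [hlcm, Nat.totient_two_mul_of_even ⟨k, rfl⟩]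
  · have hlcm : Nat.lcm 4 n = 2 * (2 * n) := by
      rw [(Nat.Coprime.pow_left 2 (Nat.coprime_two_left.2 hodd)).lcm_eq_mul]; ring
    rw [hlcm, Nat.totient_two_mul_of_even (even_two_mul n), Nat.totient_two_mul_of_odd hodd]

theorem IsPrimitiveRoot.irreducible_cyclotomic_iff_finrank_adjoin {K L : Type*} [Field K]
    [Field L] [Algebra K L] {n : ℕ} [NeZero n] {ζ : L} (hζ : IsPrimitiveRoot ζ n) :
    Irreducible (cyclotomic n K) ↔ finrank K K⟮ζ⟯ = n.totient := by
  have hint : IsIntegral K ζ := (hζ.isIntegral (NeZero.pos n)).tower_top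
  have hroot : aeval ζ (cyclotomic n K) = 0 := by
    rw [aeval_def, eval₂_eq_eval_map, map_cyclotomic]
    exact hζ.isRoot_cyclotomic (NeZero.pos n)
  rw [adjoin.finrank hint, ← natDegree_cyclotomic n K]
  constructor
  · intro hirr
    rw [minpoly.eq_of_irreducible_of_monic hirr hroot (cyclotomic.monic n K)]
  · intro hdeg
    rw [eq_of_monic_of_dvd_of_natDegree_le (minpoly.monic hint) (cyclotomic.monic n K)
      (minpoly.dvd K ζ hroot) hdeg.ge]
    exact minpoly.irreducible hint

theorem IsPrimitiveRoot.finrank_rat_adjoin {L : Type*} [Field L] [CharZero L] {n : ℕ} [NeZero n]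
    {ζ : L} (hζ : IsPrimitiveRoot ζ n) : finrank ℚ ℚ⟮ζ⟯ = n.totient :=
  hζ.irreducible_cyclotomic_iff_finrank_adjoin.1 (cyclotomic.irreducible_rat (NeZero.pos n))

theorem IsPrimitiveRoot.totient_mul_finrank_adjoin {L : Type*} [Field L] [CharZero L] {m n : ℕ}
    [NeZero m] [NeZero n] {η ζ : L} (hη : IsPrimitiveRoot η m) (hζ : IsPrimitiveRoot ζ n) :
    m.totient * finrank ℚ⟮η⟯ ℚ⟮η⟯⟮ζ⟯ = (m.lcm n).totient := by
  have : NeZero (m.lcm n) := ⟨Nat.lcm_ne_zero (NeZero.ne m) (NeZero.ne n)⟩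
  have hξ := hη.pow_mul_pow_lcm hζ (NeZero.ne m) (NeZero.ne n)
  -- No type ascriptions: those would elaborate `Algebra ℚ ℚ⟮η⟯` as `DivisionRing.toRatAlgebra`,
  -- which `isCyclotomicExtension_lcm_sup` does not recognise as its instance.
  have := (isCyclotomicExtension_singleton_iff_eq_adjoin m ℚ L ℚ⟮η⟯ hη).2 rfl
  have := (isCyclotomicExtension_singleton_iff_eq_adjoin n ℚ L ℚ⟮ζ⟯ hζ).2 rfl
  have hsup := (isCyclotomicExtension_singleton_iff_eq_adjoin _ ℚ L _ hξ).1
    (isCyclotomicExtension_lcm_sup ℚ L m n ℚ⟮η⟯ ℚ⟮ζ⟯)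
  rw [← hη.finrank_rat_adjoin, ← hξ.finrank_rat_adjoin, ← hsup, ← restrictScalars_adjoin_eq_sup]
  exact finrank_mul_finrank ℚ ℚ⟮η⟯ ℚ⟮η⟯⟮ζ⟯

theorem stmt14 (n : ℕ) (hn : 0 < n) :
    (n % 4 ≠ 0 → Irreducible ((Polynomial.cyclotomic n ℤ).map (Int.castRingHom QI))) ∧
    (n % 4 = 0 → ¬ Irreducible ((Polynomial.cyclotomic n ℤ).map (Int.castRingHom QI))) := by
  have : NeZero n := ⟨hn.ne'⟩
  obtain ⟨ζ, hζ⟩ : ∃ ζ : ℂ, IsPrimitiveRoot ζ n := ⟨_, Complex.isPrimitiveRoot_exp n hn.ne'⟩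
  have htower : Nat.totient 4 * finrank QI QI⟮ζ⟯ = (Nat.lcm 4 n).totient :=
    Complex.isPrimitiveRoot_I.totient_mul_finrank_adjoin hζ
  rw [show Nat.totient 4 = 2 by decide] at htower
  rw [map_cyclotomic_int, hζ.irreducible_cyclotomic_iff_finrank_adjoin]
  refine ⟨fun h4 => ?_, fun h4 => ?_⟩
  · rw [Nat.totient_lcm_four_of_not_four_dvd (mt Nat.mod_eq_zero_of_dvd h4)] at htower
    omega
  · rw [Nat.lcm_eq_right_iff_dvd.2 (Nat.dvd_of_mod_eq_zero h4)] at htower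
    have := Nat.totient_pos.2 hn
    omega
end

section
/- Let n ≢ 0 (mod 4), let C ⊆ ℤ/nℤ be skew-symmetric (i.e., a ∈ C implies −a ∉ C, and 0 ∉ C), and suppose that for every j with 0 ≤ j ≤ n−1 the number μ_j = i·∑_{k∈C}(w^{jk} − w^{−jk}) is rational, where w = e^{2πi/n}. Then C = ∅. -/
/-!
The numbers `μ_j` are the discrete Fourier transform of row `0` of the Hermitian adjacency matrix,
which takes the value `i` at `-a` for every `a ∈ C`. Fourier inversion writes `n · i` as a
`ℚ(ζ_n)`-linear combination of the rational `μ_j`, so `i ∈ ℚ(ζ_n)`. But then `ℚ(ζ_n)` contains a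
primitive `lcm(n, 4)`-th root of unity, and `φ(lcm(n, 4)) = 2 φ(n) > [ℚ(ζ_n) : ℚ]` when `4 ∤ n`.
-/

open Finset Complex IntermediateField ZMod

theorem Nat.totient_lcm_four {n : ℕ} (hn : ¬ 4 ∣ n) : (n.lcm 4).totient = 2 * n.totient := by
  rcases Nat.even_or_odd n with ⟨m, rfl⟩ | hodd
  · have hm : Odd m := by
      rw [Nat.odd_iff]; omega
    have hlcm : (m + m).lcm 4 = 2 * (m + m) := by
      rw [show m + m = 2 * m by ring, show (4 : ℕ) = 2 * 2 by rfl, Nat.lcm_mul_left,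
        (Nat.coprime_two_right.2 hm).lcm_eq_mul]
      ring
    rw [hlcm, Nat.totient_mul_of_prime_of_dvd Nat.prime_two (by omega)]
  · have hcop : n.Coprime 4 := by
      simpa using (Nat.coprime_two_right.2 hodd).pow_right 2
    rw [hcop.lcm_eq_mul, Nat.totient_mul hcop, show Nat.totient 4 = 2 by decide, mul_comm]

theorem IsPrimitiveRoot.notMem_adjoin_of_not_four_dvd {K : Type*} [Field K] [CharZero K]
    {n : ℕ} {ζ i : K} (hζ : IsPrimitiveRoot ζ n) (hi : IsPrimitiveRoot i 4) (hn : ¬ 4 ∣ n) :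
    i ∉ ℚ⟮ζ⟯ := by
  intro hmem
  have hn0 : 0 < n := Nat.pos_of_ne_zero (by rintro rfl; exact hn (dvd_zero 4))
  have hint : IsIntegral ℚ ζ := (hζ.isIntegral hn0).tower_top
  have : FiniteDimensional ℚ ℚ⟮ζ⟯ := adjoin.finiteDimensional hint
  have hfinrank : Module.finrank ℚ ℚ⟮ζ⟯ = n.totient := by
    rw [adjoin.finrank hint, ← Polynomial.cyclotomic_eq_minpoly_rat hζ hn0,
      Polynomial.natDegree_cyclotomic]
  have hle := IsPrimitiveRoot.lcm_totient_le_finrank (K := ℚ) (L := ℚ⟮ζ⟯)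
    (x := ⟨ζ, mem_adjoin_simple_self ℚ ζ⟩) (y := ⟨i, hmem⟩)
    (.of_map_of_injective (f := (ℚ⟮ζ⟯).val) hζ (ℚ⟮ζ⟯).val.injective)
    (.of_map_of_injective (f := (ℚ⟮ζ⟯).val) hi (ℚ⟮ζ⟯).val.injective)
    (Polynomial.cyclotomic.irreducible_rat (Nat.lcm_pos hn0 four_pos))
  rw [hfinrank, Nat.totient_lcm_four hn] at hle
  have := Nat.totient_pos.2 hn0
  omega

namespace ZMod

variable {N : ℕ}

/-- Row `0` of the Hermitian adjacency matrix of `Circ(ℤ_N, C)`, whose `(u, v)` entry is `i` if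
`u - v ∈ C`, `-i` if `v - u ∈ C` and `0` otherwise. -/
noncomputable def hermitianAdjRow (C : Finset (ZMod N)) : ZMod N → ℂ :=
  ∑ k ∈ C, (Pi.single (-k) I - Pi.single k I)

theorem hermitianAdjRow_neg_of_mem {C : Finset (ZMod N)} (hskew : ∀ a ∈ C, -a ∉ C) {a : ZMod N}
    (ha : a ∈ C) : hermitianAdjRow C (-a) = I := by
  simp [hermitianAdjRow, Finset.sum_apply, Pi.single_apply, ha, hskew a ha]

variable [NeZero N]

theorem stdAddChar_natCast (m : ℕ) :
    stdAddChar (m : ZMod N) = exp (2 * Real.pi * I / N) ^ m := by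
  rw [← exp_nat_mul, ← Int.cast_natCast, stdAddChar_coe]
  push_cast
  ring_nf

theorem stdAddChar_mul_eq_pow_val (j k : ZMod N) :
    stdAddChar (j * k) = exp (2 * Real.pi * I / N) ^ (j.val * k.val) := by
  rw [← stdAddChar_natCast]
  push_cast
  simp only [natCast_zmod_val]

theorem dft_single {E : Type*} [AddCommGroup E] [Module ℂ E] (k : ZMod N) (c : E) (j : ZMod N) :
    𝓕 (Pi.single k c) j = stdAddChar (-(k * j)) • c := by
  classical
  simp [dft_apply, Pi.single_apply]

theorem mem_of_forall_dft_mem (F : Subfield ℂ) (hF : ∀ x, stdAddChar (N := N) x ∈ F)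
    {Φ : ZMod N → ℂ} (hΦ : ∀ j, 𝓕 Φ j ∈ F) (a : ZMod N) : Φ a ∈ F := by
  have hinv : (N : ℂ) * Φ a = 𝓕 (𝓕 Φ) (-a) := by
    simp only [dft_dft, neg_neg, smul_eq_mul]
  have hmem : (N : ℂ) * Φ a ∈ F := by
    rw [hinv, dft_apply]
    exact sum_mem fun j _ => mul_mem (hF _) (hΦ j)
  simpa [NeZero.ne] using mul_mem (inv_mem (natCast_mem F N)) hmem

theorem dft_hermitianAdjRow (C : Finset (ZMod N)) (j : ZMod N) :
    𝓕 (hermitianAdjRow C) j = I * ∑ k ∈ C, (stdAddChar (j * k) - stdAddChar (-(j * k))) := by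
  simp only [hermitianAdjRow, map_sum, map_sub, Finset.sum_apply, Pi.sub_apply, dft_single,
    smul_eq_mul, mul_sum, neg_mul, neg_neg]
  refine sum_congr rfl fun k _ => ?_
  rw [mul_comm k j]
  ring

end ZMod

theorem stmt15_general (n : ℕ) (h4 : n % 4 ≠ 0) (C : Finset (ZMod n))
    (hskew : ∀ a ∈ C, -a ∉ C)
    (hrat : ∀ j : ℕ, j ≤ n - 1 → ∃ r : ℚ,
      Complex.I * ∑ k ∈ C,
        ((Complex.exp (2 * Real.pi * Complex.I / n)) ^ (j * (ZMod.val k)) -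
         (Complex.exp (2 * Real.pi * Complex.I / n))⁻¹ ^ (j * (ZMod.val k))) = (r : ℂ)) :
    C = ∅ := by
  have h4n : ¬ 4 ∣ n := fun h => h4 (Nat.mod_eq_zero_of_dvd h)
  have : NeZero n := ⟨by rintro rfl; exact h4n (dvd_zero 4)⟩
  set ζ := exp (2 * Real.pi * I / n)
  set F := (ℚ⟮ζ⟯).toSubfield
  have hζF : ∀ x : ZMod n, stdAddChar x ∈ F := fun x => by
    rw [← natCast_zmod_val x, stdAddChar_natCast]
    exact pow_mem (mem_adjoin_simple_self ℚ ζ) _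
  have hdftF : ∀ j, 𝓕 (hermitianAdjRow C) j ∈ F := fun j => by
    obtain ⟨r, hr⟩ := hrat j.val (Nat.le_sub_one_of_lt j.val_lt)
    rw [dft_hermitianAdjRow]
    simp only [AddChar.map_neg_eq_inv, stdAddChar_mul_eq_pow_val, ← inv_pow]
    rw [hr]
    exact SubfieldClass.ratCast_mem F r
  rw [Finset.eq_empty_iff_forall_notMem]
  intro a ha
  have hI : I ∈ F := hermitianAdjRow_neg_of_mem hskew ha ▸ mem_of_forall_dft_mem F hζF hdftF (-a)
  exact (isPrimitiveRoot_exp n (NeZero.ne n)).notMem_adjoin_of_not_four_dvd isPrimitiveRoot_I h4n hI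

theorem stmt15 (n : ℕ) (hn : 0 < n) (h4 : n % 4 ≠ 0) (C : Finset (ZMod n))
    (h0 : (0 : ZMod n) ∉ C) (hskew : ∀ a ∈ C, -a ∉ C)
    (hrat : ∀ j : ℕ, j ≤ n - 1 → ∃ r : ℚ,
      Complex.I * ∑ k ∈ C,
        ((Complex.exp (2 * Real.pi * Complex.I / n)) ^ (j * (ZMod.val k)) -
         (Complex.exp (2 * Real.pi * Complex.I / n))⁻¹ ^ (j * (ZMod.val k))) = (r : ℂ)) :
    C = ∅ :=
  stmt15_general n h4 C hskew hrat
end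

section
/- Let n ≡ 0 (mod 4) and let C ⊆ {1,…,n−1} be skew-symmetric (a ∈ C implies n−a ∉ C). Then i·∑_{k∈C}(w^{jk} − w^{−jk}) ∈ ℤ for all j (where w = e^{2πi/n}) if and only if C = ⋃_{d∈𝒟} S_n(d) for some set 𝒟 of divisors of n/4, where each S_n(d) is either G_n^1(d) or G_n^3(d). -/
open Finset

/-!
Write `ω = e^{2πi/n}`, `ψ(a) = ω^a` on `ZMod n`, and let `g = 1_C - 1_{-C}` (the
`skewIndicator` of `C`). The `j`-th eigenvalue is `ι · ĝ(j)` with `ι = ω^{n/4} = i` and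
`ĝ(j) = ∑ₐ g(a) ψ(ja)`. The Galois automorphism `σ_t : ω ↦ ω^t` of `ℚ(ω)` sends `ι` to `χ₄(t) ι`
and `ĝ(j)` to `ĝ(tj)`. As the eigenvalues are algebraic integers, they all lie in `ℤ` iff they
are all Galois-fixed, i.e. iff `ĝ(tj) = χ₄(t) ĝ(j)` for every unit `t`, i.e. (Fourier inversion)
iff `g(ta) = χ₄(t) g(a)`.

Units act transitively on the residues with a given `gcd` with `n`. If `k ∈ C` and
`4 ∤ n / gcd(k, n)`, some unit with `χ₄ = -1` fixes `k`, which would force `g(k) = 0`; so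
`d = gcd(k, n)` divides `n / 4`. A unit `t` then maps `G_n^r(d)` to itself if `χ₄(t) = 1` and to
`G_n^{4-r}(d) = -G_n^r(d)` otherwise, so the semi-invariance of `g` says exactly that each fibre
`{k ∈ C : gcd(k, n) = d}` is one of `G_n^1(d)`, `G_n^3(d)`.
-/

section QuarterChar

variable {n : ℕ}

def quarterChar (h4 : 4 ∣ n) : (ZMod n)ˣ →* ℤˣ :=
  ZMod.χ₄.toUnitHom.comp (ZMod.unitsMap h4)

lemma odd_val_of_unit (h2 : 2 ∣ n) (s : (ZMod n)ˣ) : Odd (s : ZMod n).val :=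
  Nat.odd_iff.mpr <| Nat.two_dvd_ne_zero.mp fun h =>
    Nat.not_coprime_of_dvd_of_dvd one_lt_two h h2 (ZMod.val_coe_unit_coprime s)

lemma coe_quarterChar [NeZero n] (h4 : 4 ∣ n) (s : (ZMod n)ˣ) :
    (quarterChar h4 s : ℤ) = ZMod.χ₄ ((s : ZMod n).val : ZMod 4) := by
  rw [quarterChar, MonoidHom.comp_apply, MulChar.coe_toUnitHom, ZMod.unitsMap_val,
    ZMod.cast_eq_val]

lemma quarterChar_eq_one_iff [NeZero n] (h4 : 4 ∣ n) (s : (ZMod n)ˣ) :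
    quarterChar h4 s = 1 ↔ (s : ZMod n).val % 4 = 1 := by
  have hodd := Nat.odd_iff.mp (odd_val_of_unit (dvd_trans (by norm_num) h4) s)
  rw [← Units.val_inj, coe_quarterChar, ZMod.χ₄_nat_eq_if_mod_four]
  split_ifs <;> simp_all

lemma quarterChar_eq_neg_one_iff [NeZero n] (h4 : 4 ∣ n) (s : (ZMod n)ˣ) :
    quarterChar h4 s = -1 ↔ (s : ZMod n).val % 4 = 3 := by
  have hodd := Nat.odd_iff.mp (odd_val_of_unit (dvd_trans (by norm_num) h4) s)
  rw [← Units.val_inj, coe_quarterChar, ZMod.χ₄_nat_eq_if_mod_four]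
  split_ifs <;> simp_all; omega

lemma quarterChar_neg (h4 : 4 ∣ n) (s : (ZMod n)ˣ) :
    quarterChar h4 (-s) = -quarterChar h4 s := by
  have h : quarterChar h4 (-1) = -1 := by
    rw [← Units.val_inj]
    simp only [quarterChar, MonoidHom.comp_apply, MulChar.coe_toUnitHom, ZMod.unitsMap_val,
      Units.val_neg, Units.val_one]
    rw [ZMod.cast_neg h4, ZMod.cast_one h4]
    decide
  rw [← neg_one_mul, map_mul, h, neg_one_mul]

end QuarterChar

section SemiInvariant

variable {n : ℕ} {M : Type*} [AddCommGroup M]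

def IsSemiInvariant (χ : (ZMod n)ˣ →* ℤˣ) (f : ZMod n → M) : Prop :=
  ∀ (s : (ZMod n)ˣ) (a : ZMod n), f (s * a) = χ s • f a

lemma isSemiInvariant_iff_inv {χ : (ZMod n)ˣ →* ℤˣ} {f : ZMod n → M} :
    IsSemiInvariant χ f ↔ ∀ (s : (ZMod n)ˣ) (a : ZMod n), f (↑s⁻¹ * a) = χ s • f a := by
  rw [IsSemiInvariant, (Equiv.inv (ZMod n)ˣ).forall_congr_left]
  simp [map_inv, Int.units_inv_eq_self]

lemma isSemiInvariant_intCast_comp_iff {K : Type*} [Ring K] [CharZero K]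
    {χ : (ZMod n)ˣ →* ℤˣ} {g : ZMod n → ℤ} :
    IsSemiInvariant χ (fun a => (g a : K)) ↔ IsSemiInvariant χ g := by
  simp only [IsSemiInvariant, Units.smul_def, zsmul_eq_mul, smul_eq_mul]
  exact forall₂_congr fun s a => by exact_mod_cast Iff.rfl

lemma isSemiInvariant_of_forall_eq_one {χ : (ZMod n)ˣ →* ℤˣ} {g : ZMod n → ℤ}
    (hneg : ∀ a, g (-a) = -g a) (hval : ∀ a, g a ∈ ({-1, 0, 1} : Set ℤ))
    (h : ∀ (s : (ZMod n)ˣ) a, g a = 1 → g (s * a) = χ s) : IsSemiInvariant χ g := by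
  intro s a
  rw [Units.smul_def, smul_eq_mul]
  rcases hval a with ha | ha | ha
  · have := h s (-a) (by rw [hneg, ha]; rfl)
    rw [mul_neg, hneg] at this
    rw [ha]
    linarith
  · rw [Set.mem_singleton_iff.mp ha, mul_zero]
    -- otherwise `s⁻¹` would carry `±(s * a)`, where `g = 1`, to `±a`, where `g = 0`
    rcases hval (s * a) with hsa | hsa | hsa
    · have := h s⁻¹ (-(s * a)) (by rw [hneg, hsa]; rfl)
      rw [mul_neg, ← mul_assoc, Units.inv_mul, one_mul, hneg, Set.mem_singleton_iff.mp ha] at this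
      exact absurd this.symm (by simp)
    · exact hsa
    · have := h s⁻¹ (s * a) (Set.mem_singleton_iff.mp hsa)
      rw [← mul_assoc, Units.inv_mul, one_mul, Set.mem_singleton_iff.mp ha] at this
      exact absurd this.symm (χ s⁻¹).ne_zero
  · rw [h s a (Set.mem_singleton_iff.mp ha), Set.mem_singleton_iff.mp ha, mul_one]

end SemiInvariant

section Fourier

variable {n : ℕ} [NeZero n] {K : Type*} [Field K] (ψ : AddChar (ZMod n) K)

def fourierSum (f : ZMod n → K) (j : ZMod n) : K :=
  ∑ a, f a * ψ (j * a)

lemma fourierSum_comp_unit_mul (f : ZMod n → K) (u : (ZMod n)ˣ) (j : ZMod n) :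
    fourierSum ψ (fun a => f (u * a)) j = fourierSum ψ f (↑u⁻¹ * j) := by
  refine Fintype.sum_equiv (Units.mulLeft u) _ _ fun a => ?_
  simp only [Units.mulLeft_apply]
  rw [mul_mul_mul_comm, Units.inv_mul, one_mul]

lemma fourierSum_zsmul (c : ℤ) (f : ZMod n → K) : fourierSum ψ (c • f) = c • fourierSum ψ f := by
  ext j
  simp only [fourierSum, Pi.smul_apply, Finset.smul_sum, smul_mul_assoc]

variable {ψ}

lemma sum_fourierSum_mul (hψ : ψ.IsPrimitive) (f : ZMod n → K) (b : ZMod n) :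
    ∑ j, fourierSum ψ f j * ψ (-(j * b)) = n * f b := by
  classical
  have hψ' (j a : ZMod n) : ψ (j * a) * ψ (-(j * b)) = ψ (j * (a - b)) := by
    rw [← AddChar.map_add_eq_mul, mul_sub, sub_eq_add_neg]
  simp_rw [fourierSum, Finset.sum_mul, mul_assoc, hψ']
  rw [Finset.sum_comm]
  simp_rw [← Finset.mul_sum, AddChar.sum_mulShift _ hψ, sub_eq_zero]
  simp [ZMod.card, mul_comm]

lemma fourierSum_injective [NeZero (n : K)] (hψ : ψ.IsPrimitive) :
    Function.Injective (fourierSum ψ) := by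
  intro f g hfg
  ext b
  have h := sum_fourierSum_mul hψ f b
  rw [hfg, sum_fourierSum_mul hψ g b] at h
  exact (mul_right_inj' (NeZero.ne _)).mp h.symm

lemma isSemiInvariant_fourierSum_iff [NeZero (n : K)] (hψ : ψ.IsPrimitive)
    {χ : (ZMod n)ˣ →* ℤˣ} {f : ZMod n → K} :
    IsSemiInvariant χ (fourierSum ψ f) ↔ IsSemiInvariant χ f := by
  have key (s : (ZMod n)ˣ) : (fun a => f (s * a)) = (χ s : ℤ) • f ↔
      (fun j => fourierSum ψ f (↑s⁻¹ * j)) = (χ s : ℤ) • fourierSum ψ f := by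
    rw [← (fourierSum_injective hψ).eq_iff, fourierSum_zsmul]
    simp only [funext_iff, fourierSum_comp_unit_mul]
  simp only [funext_iff, Pi.smul_apply, ← Units.smul_def] at key
  rw [isSemiInvariant_iff_inv]
  exact forall_congr' fun s => (key s).symm

end Fourier

lemma pow_eq_χ₄_smul {R : Type*} [Ring R] {ι : R} (hι : ι ^ 2 = -1) {m : ℕ} (hm : Odd m) :
    ι ^ m = ZMod.χ₄ m • ι := by
  obtain ⟨k, rfl⟩ := hm
  rw [ZMod.χ₄_eq_neg_one_pow (by omega), pow_succ, pow_mul, hι, zsmul_eq_mul]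
  norm_num [Nat.mul_add_div]

lemma exists_int_eq_of_isIntegral_of_forall_algEquiv_apply_eq {K : Type*} [Field K]
    [Algebra ℚ K] [IsGalois ℚ K] [FiniteDimensional ℚ K] {x : K} (hx : IsIntegral ℤ x)
    (hfix : ∀ σ : K ≃ₐ[ℚ] K, σ x = x) : ∃ z : ℤ, x = z := by
  have : CharZero K := charZero_of_injective_algebraMap (algebraMap ℚ K).injective
  obtain ⟨q, hq⟩ := (IsGalois.mem_range_algebraMap_iff_fixed x).mpr hfix
  exact hx.exists_int_iff_exists_rat.mp ⟨q, by rw [← hq, eq_ratCast]⟩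

namespace IsPrimitiveRoot

variable {n : ℕ} [NeZero n] {K : Type*} [Field K] {ζ : K}

lemma pow_div_four_sq (hζ : IsPrimitiveRoot ζ n) (h4 : 4 ∣ n) : (ζ ^ (n / 4)) ^ 2 = -1 := by
  have h2 : 2 ∣ n := dvd_trans (by norm_num) h4
  have h := hζ.pow_of_dvd (Nat.div_pos (Nat.le_of_dvd (NeZero.pos n) h2) two_pos).ne'
    (Nat.div_dvd_of_dvd h2)
  rw [Nat.div_div_self h2 (NeZero.ne n)] at h
  rw [← pow_mul, show n / 4 * 2 = n / 2 by omega, h.eq_neg_one_of_two_right]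

lemma pow_div_four_pow_val_unit (hζ : IsPrimitiveRoot ζ n) (h4 : 4 ∣ n) (t : (ZMod n)ˣ) :
    (ζ ^ (n / 4)) ^ (t : ZMod n).val = quarterChar h4 t • ζ ^ (n / 4) := by
  rw [pow_eq_χ₄_smul (hζ.pow_div_four_sq h4) (odd_val_of_unit (dvd_trans (by norm_num) h4) t),
    Units.smul_def, coe_quarterChar]

variable {R : Type*} [CommRing R] [Algebra R K]

lemma algEquiv_zmodChar (hζ : IsPrimitiveRoot ζ n) (σ : K ≃ₐ[R] K) (a : ZMod n) :
    σ (AddChar.zmodChar n hζ.pow_eq_one a) =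
      AddChar.zmodChar n hζ.pow_eq_one (hζ.autToPow R σ * a) := by
  rw [AddChar.zmodChar_apply, map_pow, ← hζ.autToPow_spec R σ, ← pow_mul,
    ← AddChar.zmodChar_apply' hζ.pow_eq_one]
  simp

lemma algEquiv_fourierSum (hζ : IsPrimitiveRoot ζ n) (σ : K ≃ₐ[R] K) (g : ZMod n → ℤ)
    (j : ZMod n) :
    σ (fourierSum (AddChar.zmodChar n hζ.pow_eq_one) (fun a => g a) j) =
      fourierSum (AddChar.zmodChar n hζ.pow_eq_one) (fun a => g a) (hζ.autToPow R σ * j) := by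
  simp only [fourierSum, map_sum, map_mul, map_intCast, hζ.algEquiv_zmodChar, mul_assoc]

variable [Algebra ℚ K] [IsCyclotomicExtension {n} ℚ K]

lemma autToPow_surjective (hζ : IsPrimitiveRoot ζ n) : Function.Surjective (hζ.autToPow ℚ) := by
  have : IsGalois ℚ K := IsCyclotomicExtension.isGalois {n} ℚ K
  have : FiniteDimensional ℚ K := IsCyclotomicExtension.finiteDimensional {n} ℚ K
  refine ((hζ.autToPow_injective ℚ).bijective_of_nat_card_le ?_).surjective
  rw [IsGalois.card_aut_eq_finrank, IsCyclotomicExtension.finrank K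
    (Polynomial.cyclotomic.irreducible_rat (NeZero.pos n)), Nat.card_eq_fintype_card,
    ZMod.card_units_eq_totient]

theorem exists_int_eq_iff_isSemiInvariant_of_cyclotomic (hζ : IsPrimitiveRoot ζ n)
    (h4 : 4 ∣ n) (g : ZMod n → ℤ) :
    (∀ j, ∃ z : ℤ,
      ζ ^ (n / 4) * fourierSum (AddChar.zmodChar n hζ.pow_eq_one) (fun a => g a) j = z) ↔
      IsSemiInvariant (quarterChar h4) g := by
  have : CharZero K := charZero_of_injective_algebraMap (algebraMap ℚ K).injective
  have : IsGalois ℚ K := IsCyclotomicExtension.isGalois {n} ℚ K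
  have : FiniteDimensional ℚ K := IsCyclotomicExtension.finiteDimensional {n} ℚ K
  rw [← isSemiInvariant_intCast_comp_iff (K := K),
    ← isSemiInvariant_fourierSum_iff (AddChar.zmodChar_primitive_of_primitive_root n hζ)]
  set F := fourierSum (AddChar.zmodChar n hζ.pow_eq_one) (fun a => (g a : K))
  set χ := quarterChar h4
  have hσ (σ : K ≃ₐ[ℚ] K) (j : ZMod n) :
      σ (ζ ^ (n / 4) * F j) = χ (hζ.autToPow ℚ σ) • (ζ ^ (n / 4) * F (hζ.autToPow ℚ σ * j)) := by
    rw [map_mul, map_pow, ← hζ.autToPow_spec ℚ σ, pow_right_comm,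
      hζ.pow_div_four_pow_val_unit h4, hζ.algEquiv_fourierSum, smul_mul_assoc]
  have hsq (t : (ZMod n)ˣ) (x : K) : χ t • χ t • x = x := by
    rw [smul_smul, Int.units_mul_self, one_smul]
  constructor
  · intro hint t j
    obtain ⟨σ, rfl⟩ := hζ.autToPow_surjective t
    obtain ⟨z, hz⟩ := hint j
    have h := hσ σ j
    rw [hz, map_intCast, ← hz] at h
    apply mul_left_cancel₀ (pow_ne_zero _ (hζ.ne_zero (NeZero.ne n)))
    rw [mul_smul_comm, ← hsq (hζ.autToPow ℚ σ) (_ * F _), ← h]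
  · intro hF j
    refine exists_int_eq_of_isIntegral_of_forall_algEquiv_apply_eq ?_ fun σ => ?_
    · have hζint : IsIntegral ℤ ζ := hζ.isIntegral (NeZero.pos n)
      refine (hζint.pow _).mul (IsIntegral.sum _ fun a _ => IsIntegral.mul ?_ (hζint.pow _))
      simpa using isIntegral_algebraMap (R := ℤ) (A := K) (x := g a)
    · rw [hσ, hF, mul_smul_comm, hsq]

end IsPrimitiveRoot

theorem IsPrimitiveRoot.exists_int_eq_iff_isSemiInvariant {n : ℕ} [NeZero n] {L : Type*}
    [Field L] [CharZero L] {ω : L} (hω : IsPrimitiveRoot ω n) (h4 : 4 ∣ n) (g : ZMod n → ℤ) :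
    (∀ j, ∃ z : ℤ,
      ω ^ (n / 4) * fourierSum (AddChar.zmodChar n hω.pow_eq_one) (fun a => g a) j = z) ↔
      IsSemiInvariant (quarterChar h4) g := by
  -- the cyclotomic-extension instance of `CyclotomicField` is stated for this algebra structure
  let := CyclotomicField.algebra n ℚ
  have hζ := IsCyclotomicExtension.zeta_spec n ℚ (CyclotomicField n ℚ)
  obtain ⟨φ, hφ⟩ := (hζ.embeddingsEquivPrimitiveRoots L
    (Polynomial.cyclotomic.irreducible_rat (NeZero.pos n))).surjective
    ⟨ω, (mem_primitiveRoots (NeZero.pos n)).mpr hω⟩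
  replace hφ : φ (IsCyclotomicExtension.zeta n ℚ (CyclotomicField n ℚ)) = ω :=
    congrArg Subtype.val hφ
  rw [← hζ.exists_int_eq_iff_isSemiInvariant_of_cyclotomic h4 g]
  refine forall_congr' fun j => exists_congr fun z => ?_
  rw [← φ.injective.eq_iff, map_intCast]
  simp [fourierSum, map_sum, AddChar.zmodChar_apply, hφ]

section UnitLifts

variable {n : ℕ}

lemma exists_unit_natCast_val_eq [NeZero n] {L : ℕ} (hL : L ∣ n) (u : (ZMod L)ˣ) :
    ∃ s : (ZMod n)ˣ, ((s : ZMod n).val : ZMod L) = u := by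
  obtain ⟨s, rfl⟩ := ZMod.unitsMap_surjective hL u
  exact ⟨s, by rw [ZMod.unitsMap_val, ZMod.cast_eq_val]⟩

lemma natCast_mul_eq_of_modEq {d a x y : ℕ} (hd : d ∣ n) (h : a * x ≡ y [MOD n / d]) :
    (a : ZMod n) * (x * d : ℕ) = (y * d : ℕ) := by
  have := h.mul_right' d
  rw [Nat.div_mul_cancel hd, ← ZMod.natCast_eq_natCast_iff] at this
  push_cast at this ⊢
  rw [← this]
  ring

lemma exists_unit_mul_natCast_eq [NeZero n] {k k' : ℕ} (h : k.gcd n = k'.gcd n) :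
    ∃ s : (ZMod n)ˣ, (s : ZMod n) * k = k' := by
  obtain ⟨d, hkd, hk'd⟩ : ∃ d, k.gcd n = d ∧ k'.gcd n = d := ⟨_, rfl, h.symm⟩
  have hd : 0 < d := hkd ▸ Nat.gcd_pos_of_pos_right k (NeZero.pos n)
  have hx : (k / d).Coprime (n / d) := hkd ▸ Nat.coprime_div_gcd_div_gcd (hkd ▸ hd)
  have hx' : (k' / d).Coprime (n / d) := hk'd ▸ Nat.coprime_div_gcd_div_gcd (hk'd ▸ hd)
  obtain ⟨s, hs⟩ := exists_unit_natCast_val_eq (Nat.div_dvd_of_dvd (hkd ▸ Nat.gcd_dvd_right k n))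
    (ZMod.unitOfCoprime _ hx' * (ZMod.unitOfCoprime _ hx)⁻¹)
  refine ⟨s, ?_⟩
  have hmod : (s : ZMod n).val * (k / d) ≡ k' / d [MOD n / d] := by
    rw [← ZMod.natCast_eq_natCast_iff, Nat.cast_mul, hs, Units.val_mul, ZMod.coe_unitOfCoprime,
      mul_assoc, ← ZMod.coe_unitOfCoprime _ hx, Units.inv_mul, mul_one]
  have := natCast_mul_eq_of_modEq (hkd ▸ Nat.gcd_dvd_right k n) hmod
  rwa [Nat.div_mul_cancel (hkd ▸ Nat.gcd_dvd_left k n),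
    Nat.div_mul_cancel (hk'd ▸ Nat.gcd_dvd_left k' n), ZMod.natCast_val, ZMod.cast_id] at this

lemma exists_unit_mul_natCast_eq_self_quarterChar_eq_neg_one [NeZero n] (h4 : 4 ∣ n) {k : ℕ}
    (hk : ¬4 * k.gcd n ∣ n) : ∃ s : (ZMod n)ˣ, (s : ZMod n) * k = k ∧ quarterChar h4 s = -1 := by
  have hdn := Nat.gcd_dvd_right k n
  set m := n / k.gcd n
  have hm : ¬4 ∣ m := by rwa [Nat.dvd_div_iff_mul_dvd hdn, mul_comm]
  -- `s` lifts `1 + m * c`, which is `1` mod `m` and `3` mod `4`, from `ZMod (lcm m 4)`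
  obtain ⟨c, hc⟩ : ∃ c, (1 + m * c) % 4 = 3 := by
    rcases Nat.even_or_odd m with ⟨t, ht⟩ | ⟨t, ht⟩
    · exact ⟨1, by omega⟩
    · exact ⟨2, by omega⟩
  have hcop : (1 + m * c).Coprime (Nat.lcm m 4) := by
    refine Nat.Coprime.coprime_dvd_right (Nat.lcm_dvd_mul m 4) (Nat.Coprime.mul_right ?_ ?_)
    · exact (Nat.coprime_add_mul_left_left 1 m c).mpr (Nat.coprime_one_left m)
    · rw [Nat.Coprime, Nat.gcd_comm, Nat.gcd_rec, hc]
      norm_num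
  obtain ⟨s, hs⟩ := exists_unit_natCast_val_eq (Nat.lcm_dvd (Nat.div_dvd_of_dvd hdn) h4)
    (ZMod.unitOfCoprime _ hcop)
  rw [ZMod.coe_unitOfCoprime, ZMod.natCast_eq_natCast_iff] at hs
  refine ⟨s, ?_, (quarterChar_eq_neg_one_iff h4 s).mpr ?_⟩
  · have hs1 : (s : ZMod n).val ≡ 1 [MOD m] :=
      (hs.of_dvd (Nat.dvd_lcm_left m 4)).trans (Nat.add_mul_mod_self_left 1 m c)
    have := natCast_mul_eq_of_modEq hdn (by simpa using hs1.mul_right (k / k.gcd n))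
    rwa [Nat.div_mul_cancel (Nat.gcd_dvd_left k n), ZMod.natCast_val, ZMod.cast_id] at this
  · have := hs.of_dvd (Nat.dvd_lcm_right m 4)
    unfold Nat.ModEq at this
    omega

end UnitLifts

section Grset

variable {n : ℕ}

lemma mem_Grset {d r m : ℕ} :
    m ∈ Grset n d r ↔ m < n ∧ d ∣ m ∧ m / d % 4 = r ∧ m.gcd n = d := by
  simp [Grset]

lemma odd_div_gcd {k : ℕ} (hk : 0 < k) (h4 : 4 * k.gcd n ∣ n) : Odd (k / k.gcd n) := by
  have hcop := Nat.coprime_div_gcd_div_gcd (Nat.gcd_pos_of_pos_left n hk)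
  have h2 : 2 ∣ n / k.gcd n := by
    rw [Nat.dvd_div_iff_mul_dvd (Nat.gcd_dvd_right k n)]
    exact dvd_trans (Nat.mul_dvd_mul_left _ (by norm_num)) (mul_comm 4 (k.gcd n) ▸ h4)
  exact Nat.odd_iff.mpr <| Nat.two_dvd_ne_zero.mp fun h =>
    Nat.not_coprime_of_dvd_of_dvd one_lt_two h h2 hcop

lemma unit_mul_mem_Grset [NeZero n] {d r k : ℕ} (h4d : 4 * d ∣ n) (s : (ZMod n)ˣ) (hk : k ∈ Grset n d r) :
    ((s : ZMod n) * k).val ∈ Grset n d ((s : ZMod n).val * r % 4) := by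
  obtain ⟨hkn, ⟨x, rfl⟩, rfl, hgcd⟩ := mem_Grset.mp hk
  obtain ⟨N, hN⟩ := dvd_trans (dvd_mul_left d 4) h4d
  have hd : 0 < d := Nat.pos_of_ne_zero fun h => NeZero.ne n (by simp [hN, h])
  have h4N : 4 ∣ N := Nat.dvd_of_mul_dvd_mul_right hd (by rwa [hN, mul_comm d N] at h4d)
  have hval : ((s : ZMod n) * (d * x : ℕ)).val = d * ((s : ZMod n).val * x % N) := by
    have hmod (y : ℕ) : y % n = y % (d * N) := by rw [hN]
    rw [ZMod.val_mul, ZMod.val_cast_of_lt hkn, mul_left_comm, hmod, Nat.mul_mod_mul_left]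
  refine mem_Grset.mpr ⟨ZMod.val_lt _, hval ▸ dvd_mul_right d _, ?_, ?_⟩
  · rw [hval, Nat.mul_div_cancel_left _ hd, Nat.mod_mod_of_dvd _ h4N, Nat.mul_div_cancel_left _ hd,
      Nat.mul_mod_mod]
  · rw [ZMod.val_mul, ZMod.val_cast_of_lt hkn, ← Nat.gcd_rec, Nat.gcd_comm,
      Nat.Coprime.gcd_mul_left_cancel _ (ZMod.val_coe_unit_coprime s), hgcd]

lemma mul_mod_four_eq_self_iff {a r : ℕ} (ha : Odd a) (hr : Odd r) :
    a * r % 4 = r % 4 ↔ a % 4 = 1 := by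
  rw [Nat.odd_iff] at ha hr
  rw [Nat.mul_mod]
  have ha4 : a % 4 = 1 ∨ a % 4 = 3 := by omega
  have hr4 : r % 4 = 1 ∨ r % 4 = 3 := by omega
  rcases ha4 with h | h <;> rcases hr4 with h' | h' <;> simp [h, h']

lemma unit_mul_mem_Grset_of_quarterChar_eq_one [NeZero n] (h4 : 4 ∣ n) {d r k : ℕ} (h4d : 4 * d ∣ n)
    (hr : Odd r) {s : (ZMod n)ˣ} (hs : quarterChar h4 s = 1) (hk : k ∈ Grset n d r) :
    ((s : ZMod n) * k).val ∈ Grset n d r := by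
  have h := unit_mul_mem_Grset h4d s hk
  have hr4 : r % 4 = r := (mem_Grset.mp hk).2.2.1 ▸ Nat.mod_mod _ _
  rwa [(mul_mod_four_eq_self_iff (odd_val_of_unit (dvd_trans (by norm_num) h4) s) hr).mpr
    ((quarterChar_eq_one_iff h4 s).mp hs), hr4] at h

end Grset

section SkewIndicator

variable {n : ℕ}

def skewIndicator (C : Finset ℕ) (a : ZMod n) : ℤ :=
  (if a.val ∈ C then 1 else 0) - (if (-a).val ∈ C then 1 else 0)

variable {C : Finset ℕ}

lemma skewIndicator_neg (a : ZMod n) : skewIndicator C (-a) = -skewIndicator C a := by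
  simp only [skewIndicator, neg_neg, neg_sub]

lemma skewIndicator_mem (a : ZMod n) : skewIndicator C a ∈ ({-1, 0, 1} : Set ℤ) := by
  unfold skewIndicator
  split_ifs <;> simp

lemma skewIndicator_eq_one_iff [NeZero n] (h0 : 0 ∉ C) (hskew : ∀ a ∈ C, n - a ∉ C) (a : ZMod n) :
    skewIndicator C a = 1 ↔ a.val ∈ C := by
  have hneg : a.val ∈ C → (-a).val ∉ C := fun ha => by
    rw [ZMod.neg_val, if_neg fun h => h0 (by rwa [h, ZMod.val_zero] at ha)]
    exact hskew _ ha
  unfold skewIndicator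
  by_cases ha : a.val ∈ C
  · simp [ha, hneg ha]
  · by_cases ha' : (-a).val ∈ C <;> simp [ha, ha']

lemma skewIndicator_eq_neg_one_iff [NeZero n] (h0 : 0 ∉ C) (hskew : ∀ a ∈ C, n - a ∉ C) (a : ZMod n) :
    skewIndicator C a = -1 ↔ (-a).val ∈ C := by
  rw [← skewIndicator_eq_one_iff h0 hskew, skewIndicator_neg, neg_eq_iff_eq_neg]

end SkewIndicator

lemma mem_divisors_div_four_iff {n d : ℕ} [NeZero n] (h4 : 4 ∣ n) :
    d ∈ (n / 4).divisors ↔ 4 * d ∣ n := by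
  rw [Nat.mem_divisors, Nat.dvd_div_iff_mul_dvd h4]
  exact and_iff_left (Nat.div_pos (Nat.le_of_dvd (NeZero.pos n) h4) four_pos).ne'

section Structure

variable {n : ℕ} [NeZero n] (h4 : 4 ∣ n) {C : Finset ℕ}

lemma four_mul_gcd_dvd (h0 : 0 ∉ C) (hskew : ∀ a ∈ C, n - a ∉ C)
    (hg : IsSemiInvariant (quarterChar h4) (skewIndicator C)) {k : ℕ} (hkn : k < n)
    (hk : k ∈ C) : 4 * k.gcd n ∣ n := by
  by_contra h
  obtain ⟨s, hsk, hs⟩ := exists_unit_mul_natCast_eq_self_quarterChar_eq_neg_one h4 h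
  have hk1 : skewIndicator C (k : ZMod n) = 1 := by
    rwa [skewIndicator_eq_one_iff h0 hskew, ZMod.val_cast_of_lt hkn]
  have := hg s k
  rw [hsk, hk1, hs] at this
  norm_num at this

lemma mem_iff_div_gcd_mod_four_eq (hCn : ∀ a ∈ C, 0 < a ∧ a < n) (hskew : ∀ a ∈ C, n - a ∉ C)
    (hg : IsSemiInvariant (quarterChar h4) (skewIndicator C)) {k m : ℕ} (hk : k ∈ C)
    (hm : m < n) (hgcd : m.gcd n = k.gcd n) :
    m ∈ C ↔ m / k.gcd n % 4 = k / k.gcd n % 4 := by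
  have h0 : 0 ∉ C := fun h => (hCn 0 h).1.ne rfl
  obtain ⟨s, hs⟩ := exists_unit_mul_natCast_eq hgcd.symm
  have hkG : k ∈ Grset n (k.gcd n) (k / k.gcd n % 4) :=
    mem_Grset.mpr ⟨(hCn k hk).2, Nat.gcd_dvd_left k n, rfl, rfl⟩
  have h4d := four_mul_gcd_dvd h4 h0 hskew hg (hCn k hk).2 hk
  have hmG := unit_mul_mem_Grset h4d s hkG
  rw [hs, ZMod.val_cast_of_lt hm] at hmG
  have hsm := hg s k
  rw [hs, (skewIndicator_eq_one_iff h0 hskew (k : ZMod n)).mpr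
    (by rwa [ZMod.val_cast_of_lt (hCn k hk).2]), Units.smul_def, smul_eq_mul, mul_one] at hsm
  rw [(mem_Grset.mp hmG).2.2.1, ← ZMod.val_cast_of_lt hm, ← skewIndicator_eq_one_iff h0 hskew, hsm,
    Nat.mul_mod_mod, mul_mod_four_eq_self_iff (odd_val_of_unit (dvd_trans (by norm_num) h4) s)
    (odd_div_gcd (hCn k hk).1 h4d), ← quarterChar_eq_one_iff h4, Units.val_eq_one]

lemma filter_gcd_eq_Grset (hCn : ∀ a ∈ C, 0 < a ∧ a < n) (hskew : ∀ a ∈ C, n - a ∉ C)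
    (hg : IsSemiInvariant (quarterChar h4) (skewIndicator C)) {k : ℕ} (hk : k ∈ C) :
    C.filter (·.gcd n = k.gcd n) = Grset n (k.gcd n) (k / k.gcd n % 4) := by
  ext m
  rw [Finset.mem_filter, mem_Grset]
  constructor
  · rintro ⟨hm, hgcd⟩
    exact ⟨(hCn m hm).2, hgcd ▸ Nat.gcd_dvd_left m n,
      (mem_iff_div_gcd_mod_four_eq h4 hCn hskew hg hk (hCn m hm).2 hgcd).mp hm, hgcd⟩
  · rintro ⟨hm, -, hmod, hgcd⟩
    exact ⟨(mem_iff_div_gcd_mod_four_eq h4 hCn hskew hg hk hm hgcd).mpr hmod, hgcd⟩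

lemma exists_eq_biUnion_Grset (hCn : ∀ a ∈ C, 0 < a ∧ a < n) (hskew : ∀ a ∈ C, n - a ∉ C)
    (hg : IsSemiInvariant (quarterChar h4) (skewIndicator C)) :
    ∃ 𝒟 : Finset ℕ, 𝒟 ⊆ (n / 4).divisors ∧ ∃ S : ℕ → Finset ℕ,
      (∀ d ∈ 𝒟, S d = Grset n d 1 ∨ S d = Grset n d 3) ∧ C = 𝒟.biUnion S := by
  have h4d {k : ℕ} (hk : k ∈ C) : 4 * k.gcd n ∣ n :=
    four_mul_gcd_dvd h4 (fun h => (hCn 0 h).1.ne rfl) hskew hg (hCn k hk).2 hk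
  refine ⟨C.image (·.gcd n), fun d hd => ?_, fun d => C.filter (·.gcd n = d), fun d hd => ?_,
    (Finset.image_biUnion_filter_eq C _).symm⟩
  all_goals obtain ⟨k, hk, rfl⟩ := Finset.mem_image.mp hd
  · exact (mem_divisors_div_four_iff h4).mpr (h4d hk)
  · simp only [filter_gcd_eq_Grset h4 hCn hskew hg hk]
    have := Nat.odd_iff.mp (odd_div_gcd (hCn k hk).1 (h4d hk))
    rcases (by omega : k / k.gcd n % 4 = 1 ∨ k / k.gcd n % 4 = 3) with h | h <;> simp [h]

lemma isSemiInvariant_skewIndicator_of_eq_biUnion (h0 : 0 ∉ C) (hskew : ∀ a ∈ C, n - a ∉ C)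
    {𝒟 : Finset ℕ} (h𝒟 : 𝒟 ⊆ (n / 4).divisors) {S : ℕ → Finset ℕ}
    (hS : ∀ d ∈ 𝒟, S d = Grset n d 1 ∨ S d = Grset n d 3) (hCS : C = 𝒟.biUnion S) :
    IsSemiInvariant (quarterChar h4) (skewIndicator C) := by
  refine isSemiInvariant_of_forall_eq_one skewIndicator_neg skewIndicator_mem fun s a ha => ?_
  rw [skewIndicator_eq_one_iff h0 hskew, hCS, Finset.mem_biUnion] at ha
  obtain ⟨d, hd, had⟩ := ha
  obtain ⟨r, hr, hSd⟩ : ∃ r, Odd r ∧ S d = Grset n d r := by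
    rcases hS d hd with h | h
    · exact ⟨1, odd_one, h⟩
    · exact ⟨3, by decide, h⟩
  have hmem {t : (ZMod n)ˣ} (ht : quarterChar h4 t = 1) : ((t : ZMod n) * a).val ∈ C := by
    rw [hCS, Finset.mem_biUnion]
    refine ⟨d, hd, hSd ▸ ?_⟩
    rw [hSd] at had
    simpa using unit_mul_mem_Grset_of_quarterChar_eq_one h4
      ((mem_divisors_div_four_iff h4).mp (h𝒟 hd)) hr ht had
  rcases Int.units_eq_one_or (quarterChar h4 s) with hs | hs
  · rw [hs, (skewIndicator_eq_one_iff h0 hskew _).mpr (hmem hs), Units.val_one]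
  · rw [hs, (skewIndicator_eq_neg_one_iff h0 hskew _).mpr, Units.val_neg, Units.val_one]
    simpa using hmem (t := -s) (by rw [quarterChar_neg, hs, neg_neg])

theorem isSemiInvariant_skewIndicator_iff (hCn : ∀ a ∈ C, 0 < a ∧ a < n)
    (hskew : ∀ a ∈ C, n - a ∉ C) :
    IsSemiInvariant (quarterChar h4) (skewIndicator C) ↔
      ∃ 𝒟 : Finset ℕ, 𝒟 ⊆ (n / 4).divisors ∧ ∃ S : ℕ → Finset ℕ,
        (∀ d ∈ 𝒟, S d = Grset n d 1 ∨ S d = Grset n d 3) ∧ C = 𝒟.biUnion S :=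
  ⟨exists_eq_biUnion_Grset h4 hCn hskew, fun ⟨_, h𝒟, _, hS, hCS⟩ =>
    isSemiInvariant_skewIndicator_of_eq_biUnion h4 (fun h => (hCn 0 h).1.ne rfl) hskew h𝒟 hS hCS⟩

end Structure

section Eigenvalues

variable {n : ℕ} [NeZero n]

lemma Complex.exp_two_pi_I_div_pow_div_four (h4 : 4 ∣ n) :
    Complex.exp (2 * Real.pi * Complex.I / n) ^ (n / 4) = Complex.I := by
  rw [← Complex.exp_nat_mul, Nat.cast_div h4 (by norm_num)]
  convert Complex.exp_pi_div_two_mul_I using 2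
  field_simp [NeZero.ne (n : ℂ)]
  ring

lemma sum_natCast_eq_sum_ite {M : Type*} [AddCommMonoid M] {C : Finset ℕ} (hC : ∀ k ∈ C, k < n)
    (f : ZMod n → M) : ∑ k ∈ C, f k = ∑ a, if a.val ∈ C then f a else 0 := by
  rw [← Finset.sum_filter]
  refine Finset.sum_nbij' (↑) ZMod.val (fun k hk => ?_) (fun a ha => ?_) (fun k hk => ?_)
    (fun a _ => ZMod.natCast_zmod_val a) (fun _ _ => rfl)
  · simpa [ZMod.val_cast_of_lt (hC k hk)] using hk
  · simpa using ha
  · exact ZMod.val_cast_of_lt (hC k hk)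

lemma sum_pow_sub_inv_pow_eq_fourierSum {K : Type*} [Field K] {ω : K} (hω : IsPrimitiveRoot ω n)
    {C : Finset ℕ} (hC : ∀ k ∈ C, k < n) (j : ℕ) :
    ∑ k ∈ C, (ω ^ (j * k) - ω⁻¹ ^ (j * k)) =
      fourierSum (AddChar.zmodChar n hω.pow_eq_one) (fun a => skewIndicator C a) j := by
  set ψ := AddChar.zmodChar n hω.pow_eq_one
  have hneg : ∑ a : ZMod n, (if (-a).val ∈ C then ψ (j * a) else 0) =
      ∑ a : ZMod n, if a.val ∈ C then ψ (-(j * a)) else 0 :=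
    Fintype.sum_equiv (Equiv.neg _) _ _ fun a => by simp
  simp only [fourierSum, skewIndicator, Int.cast_sub, Int.cast_ite, Int.cast_one, Int.cast_zero,
    sub_mul, ite_mul, one_mul, zero_mul, Finset.sum_sub_distrib, hneg,
    ← sum_natCast_eq_sum_ite hC, AddChar.map_neg_eq_inv, ← Nat.cast_mul, AddChar.zmodChar_apply',
    inv_pow, ψ]

end Eigenvalues

theorem stmt16 (n : ℕ) (hn : 0 < n) (h4 : n % 4 = 0) (C : Finset ℕ)
    (hC : ∀ a ∈ C, 1 ≤ a ∧ a ≤ n - 1) (hskew : ∀ a ∈ C, n - a ∉ C) :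
    (∀ j : ℕ, ∃ z : ℤ,
      Complex.I * ∑ k ∈ C,
        ((Complex.exp (2 * Real.pi * Complex.I / n)) ^ (j * k) -
         (Complex.exp (2 * Real.pi * Complex.I / n))⁻¹ ^ (j * k)) = (z : ℂ)) ↔
    (∃ 𝒟 : Finset ℕ, 𝒟 ⊆ (n / 4).divisors ∧ ∃ S : ℕ → Finset ℕ,
      (∀ d ∈ 𝒟, S d = Grset n d 1 ∨ S d = Grset n d 3) ∧ C = 𝒟.biUnion S) := by
  have : NeZero n := ⟨hn.ne'⟩
  have h4' : 4 ∣ n := Nat.dvd_of_mod_eq_zero h4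
  have hCn : ∀ a ∈ C, 0 < a ∧ a < n := fun a ha => ⟨(hC a ha).1, by have := (hC a ha).2; omega⟩
  have hω := Complex.isPrimitiveRoot_exp n hn.ne'
  rw [← isSemiInvariant_skewIndicator_iff h4' hCn hskew,
    ← hω.exists_int_eq_iff_isSemiInvariant h4', (ZMod.natCast_zmod_surjective (n := n)).forall]
  simp only [Complex.exp_two_pi_I_div_pow_div_four h4',
    sum_pow_sub_inv_pow_eq_fourierSum hω fun k hk => (hCn k hk).2]
end
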